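/- arXiv:2409.17324 — 9 statements merged into one kernel-verified Lean document; each statement's English description precedes it below -/
import Mathlib

section
/- Let A ∈ B(X), B ∈ B(U, X), C ∈ B(X, U), D ∈ B(U) with I + D invertible, and set A^× = A − B(I+D)⁻¹C and G(z) = I + D + zC(I − zA)⁻¹B. Fix z ∈ ℂ with I − zA invertible (or z = 0). Then G(z) is invertible if and only if I − zA^× is invertible (which holds automatically at z = 0), and in that case G(z)⁻¹ = (I+D)⁻¹ − z(I+D)⁻¹C(I − zA^×)⁻¹B(I+D)⁻¹. -/
/-!
With `P = I + D`, `Q = I - zA`, `M = zC` and `N = B` one has `G(z) = P + M Q⁻¹ N` and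
`I - zA^× = Q + N P⁻¹ M`, so the theorem is the operator form of the Woodbury identity.
For `S = P + M Q⁻¹ N` and `T = Q + N P⁻¹ M`, the push-through identities
`S P⁻¹ M = M Q⁻¹ T` and `N P⁻¹ S = T Q⁻¹ N` show that `P⁻¹ - P⁻¹ M T⁻¹ N P⁻¹` inverts `S`
whenever `T` is invertible; the converse follows by exchanging the roles of `(P, M)` and `(Q, N)`.
-/

namespace ContinuousLinearMap

variable {R V W : Type*} [Ring R] [TopologicalSpace V] [AddCommGroup V] [Module R V]
  [TopologicalSpace W] [AddCommGroup W] [Module R W] [IsTopologicalAddGroup W]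

theorem comp_inverse_self {P : W →L[R] W} (hP : IsUnit P) : P ∘L Ring.inverse P = 1 :=
  Ring.mul_inverse_cancel P hP

theorem inverse_comp_self {P : W →L[R] W} (hP : IsUnit P) : Ring.inverse P ∘L P = 1 :=
  Ring.inverse_mul_cancel P hP

theorem comp_inverse_comp_cancel {P : W →L[R] W} (hP : IsUnit P) (f : V →L[R] W) :
    P ∘L (Ring.inverse P ∘L f) = f := by
  rw [← comp_assoc, comp_inverse_self hP, one_def, id_comp]

theorem inverse_comp_comp_cancel {P : W →L[R] W} (hP : IsUnit P) (f : V →L[R] W) :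
    Ring.inverse P ∘L (P ∘L f) = f := by
  rw [← comp_assoc, inverse_comp_self hP, one_def, id_comp]

variable [IsTopologicalAddGroup V]

theorem add_comp_inverse_comp_comp_inverse_comp {P : W →L[R] W} {Q : V →L[R] V}
    (hP : IsUnit P) (hQ : IsUnit Q) (M : V →L[R] W) (N : W →L[R] V) :
    (P + M ∘L Ring.inverse Q ∘L N) ∘L Ring.inverse P ∘L M =
      M ∘L Ring.inverse Q ∘L (Q + N ∘L Ring.inverse P ∘L M) := by
  simp only [add_comp, comp_add, comp_assoc, comp_inverse_comp_cancel hP,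
    inverse_comp_self hQ, one_def, comp_id]

theorem inverse_comp_comp_add_comp_inverse_comp {P : W →L[R] W} {Q : V →L[R] V}
    (hP : IsUnit P) (hQ : IsUnit Q) (M : V →L[R] W) (N : W →L[R] V) :
    N ∘L Ring.inverse P ∘L (P + M ∘L Ring.inverse Q ∘L N) =
      (Q + N ∘L Ring.inverse P ∘L M) ∘L Ring.inverse Q ∘L N := by
  simp only [add_comp, comp_add, comp_assoc, inverse_comp_self hP, one_def, comp_id,
    comp_inverse_comp_cancel hQ]

theorem isUnit_add_comp_inverse_comp_and_inverse_eq {P : W →L[R] W} {Q : V →L[R] V}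
    (hP : IsUnit P) (hQ : IsUnit Q) (M : V →L[R] W) (N : W →L[R] V)
    (hT : IsUnit (Q + N ∘L Ring.inverse P ∘L M)) :
    IsUnit (P + M ∘L Ring.inverse Q ∘L N) ∧
      Ring.inverse (P + M ∘L Ring.inverse Q ∘L N) = Ring.inverse P - Ring.inverse P ∘L M ∘L
        Ring.inverse (Q + N ∘L Ring.inverse P ∘L M) ∘L N ∘L Ring.inverse P := by
  set S := P + M ∘L Ring.inverse Q ∘L N with hS
  set S' := Ring.inverse P - Ring.inverse P ∘L M ∘L
    Ring.inverse (Q + N ∘L Ring.inverse P ∘L M) ∘L N ∘L Ring.inverse P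
  have hSS' : S * S' = 1 := by
    calc S * S'
        _ = S ∘L Ring.inverse P -
            (S ∘L Ring.inverse P ∘L M) ∘L
              Ring.inverse (Q + N ∘L Ring.inverse P ∘L M) ∘L N ∘L Ring.inverse P := by
          simp only [S', mul_def, comp_sub, comp_assoc]
        _ = 1 := by
          rw [add_comp_inverse_comp_comp_inverse_comp hP hQ]
          simp only [hS, add_comp, comp_assoc, comp_inverse_comp_cancel hT, comp_inverse_self hP]
          abel
  have hS'S : S' * S = 1 := by
    calc S' * S
        _ = Ring.inverse P ∘L S -
            Ring.inverse P ∘L M ∘L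
              Ring.inverse (Q + N ∘L Ring.inverse P ∘L M) ∘L (N ∘L Ring.inverse P ∘L S) := by
          simp only [S', mul_def, sub_comp, comp_assoc]
        _ = 1 := by
          rw [inverse_comp_comp_add_comp_inverse_comp hP hQ]
          simp only [hS, comp_add, inverse_comp_comp_cancel hT, inverse_comp_self hP]
          abel
  exact ⟨⟨⟨S, S', hSS', hS'S⟩, rfl⟩, Ring.inverse_unit ⟨S, S', hSS', hS'S⟩⟩

end ContinuousLinearMap

open ContinuousLinearMap

theorem transfer_function_inverse_general
    {X U : Type*} [NormedAddCommGroup X] [InnerProductSpace ℂ X]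
    [NormedAddCommGroup U] [InnerProductSpace ℂ U]
    (A : X →L[ℂ] X) (B : U →L[ℂ] X) (C : X →L[ℂ] U) (D : U →L[ℂ] U)
    (hD : IsUnit (1 + D))
    (Atimes : X →L[ℂ] X) (hAtimes : Atimes = A - B ∘L Ring.inverse (1 + D) ∘L C)
    (G : ℂ → (U →L[ℂ] U))
    (hG : ∀ w : ℂ, G w = 1 + D + w • (C ∘L Ring.inverse (1 - w • A) ∘L B))
    (z : ℂ) (hz : z = 0 ∨ IsUnit (1 - z • A)) :
    (IsUnit (G z) ↔ IsUnit (1 - z • Atimes)) ∧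
    (z = 0 → IsUnit (1 - z • Atimes)) ∧
    (IsUnit (1 - z • Atimes) →
      Ring.inverse (G z) =
        Ring.inverse (1 + D) -
          z • (Ring.inverse (1 + D) ∘L C ∘L Ring.inverse (1 - z • Atimes) ∘L B ∘L
            Ring.inverse (1 + D))) := by
  have hA : IsUnit (1 - z • A) := hz.elim (fun h => by simp [h]) id
  have hGz : G z = (1 + D) + (z • C) ∘L Ring.inverse (1 - z • A) ∘L B := by
    rw [hG, smul_comp]
  have hAtimes_z : 1 - z • Atimes = (1 - z • A) + B ∘L Ring.inverse (1 + D) ∘L (z • C) := by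
    rw [hAtimes, smul_sub, comp_smul, comp_smul]
    abel
  refine ⟨⟨fun hGu => ?_, fun hAu => ?_⟩, fun hz0 => by simp [hz0], fun hAu => ?_⟩
  · rw [hGz] at hGu
    rw [hAtimes_z]
    exact (isUnit_add_comp_inverse_comp_and_inverse_eq hA hD B (z • C) hGu).1
  · rw [hAtimes_z] at hAu
    rw [hGz]
    exact (isUnit_add_comp_inverse_comp_and_inverse_eq hD hA (z • C) B hAu).1
  · rw [hAtimes_z] at hAu ⊢
    rw [hGz, (isUnit_add_comp_inverse_comp_and_inverse_eq hD hA (z • C) B hAu).2, smul_comp,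
      comp_smul, comp_smul]

/-- with `A^× = A − B(I+D)⁻¹C` and `G(z) = I + D + zC(I − zA)⁻¹B`, for any `z`
with `I − zA` invertible (or `z = 0`), `G(z)` is invertible iff `I − zA^×` is invertible, and
then `G(z)⁻¹ = (I+D)⁻¹ − z(I+D)⁻¹C(I − zA^×)⁻¹B(I+D)⁻¹`. -/
theorem transfer_function_inverse
    {X U : Type*} [NormedAddCommGroup X] [InnerProductSpace ℂ X] [CompleteSpace X]
    [NormedAddCommGroup U] [InnerProductSpace ℂ U] [CompleteSpace U]
    (A : X →L[ℂ] X) (B : U →L[ℂ] X) (C : X →L[ℂ] U) (D : U →L[ℂ] U)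
    (hD : IsUnit (1 + D))
    (Atimes : X →L[ℂ] X) (hAtimes : Atimes = A - B ∘L Ring.inverse (1 + D) ∘L C)
    (G : ℂ → (U →L[ℂ] U))
    (hG : ∀ w : ℂ, G w = 1 + D + w • (C ∘L Ring.inverse (1 - w • A) ∘L B))
    (z : ℂ) (hz : z = 0 ∨ IsUnit (1 - z • A)) :
    (IsUnit (G z) ↔ IsUnit (1 - z • Atimes)) ∧
    (z = 0 → IsUnit (1 - z • Atimes)) ∧
    (IsUnit (1 - z • Atimes) →
      Ring.inverse (G z) =
        Ring.inverse (1 + D) -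
          z • (Ring.inverse (1 + D) ∘L C ∘L Ring.inverse (1 - z • Atimes) ∘L B ∘L
            Ring.inverse (1 + D))) :=
  transfer_function_inverse_general A B C D hD Atimes hAtimes G hG z hz
end

section
/- Let A ∈ B(X), B ∈ B(U, X), C ∈ B(X, U), D ∈ B(U) with I + D invertible, set A^× = A − B(I+D)⁻¹C, and let G(z) = I + D + zC(I − zA)⁻¹B. Suppose X = L ∔ L^× is a direct sum of closed subspaces with A L ⊆ L and A^× L^× ⊆ L^×, and let Π be the (bounded) projection onto L^× along L. Let I + D = D₁D₂ with D₁, D₂ invertible in B(U). Define W₁(z) = D₁ + zC(I − zA)⁻¹(I − Π)B D₂⁻¹ and W₂(z) = D₂ + z D₁⁻¹ C Π (I − zA)⁻¹ B. Then for every z = 0 or z with I − zA invertible, G(z) = W₁(z) W₂(z). -/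
/-!
Write `Q = 1 - Π` and `R = (I - zA)⁻¹`. For any `Π`, `R = ΠR + QR` and
`QR - RQ = zR(QA - AQ)R = zR(QAΠ - ΠAQ)R`. Invariance of `L = ker Π` under `A` kills `ΠAQ`, and
invariance of `L^× = range Π` under `A^×` turns `QAΠ` into `QB(I + D)⁻¹CΠ`. Sandwiching the
resulting identity for `R` between `C` and `B`, and using `(I + D)⁻¹ = D₂⁻¹D₁⁻¹`, gives exactly
the expansion of `W₁(z)W₂(z)`.
-/

open ContinuousLinearMap

theorem Ring.inverse_one_sub_eq_add {R : Type*} [Ring R] (p b : R) (hb : IsUnit (1 - b)) :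
    Ring.inverse (1 - b) = p * Ring.inverse (1 - b) + Ring.inverse (1 - b) * (1 - p)
      + Ring.inverse (1 - b) * ((1 - p) * b * p - p * b * (1 - p)) * Ring.inverse (1 - b) := by
  set r := Ring.inverse (1 - b)
  have hrl : r * (1 - b) = 1 := Ring.inverse_mul_cancel _ hb
  have hrr : (1 - b) * r = 1 := Ring.mul_inverse_cancel _ hb
  have hcomm : r * ((1 - b) * (1 - p) - (1 - p) * (1 - b)) * r = (1 - p) * r - r * (1 - p) := by
    rw [mul_sub, sub_mul, ← mul_assoc r, hrl, one_mul, ← mul_assoc r, mul_assoc _ (1 - b), hrr,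
      mul_one]
  calc r = p * r + r * (1 - p) + ((1 - p) * r - r * (1 - p)) := by noncomm_ring
    _ = _ := by rw [← hcomm]; noncomm_ring

theorem Ring.inverse_mul_of_isUnit {M₀ : Type*} [MonoidWithZero M₀] {a b : M₀} (ha : IsUnit a)
    (hb : IsUnit b) : Ring.inverse (a * b) = Ring.inverse b * Ring.inverse a := by
  obtain ⟨a, rfl⟩ := ha
  obtain ⟨b, rfl⟩ := hb
  rw [← Units.val_mul, Ring.inverse_unit, Ring.inverse_unit, Ring.inverse_unit, mul_inv_rev,
    Units.val_mul]

namespace ContinuousLinearMap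

section Projection

variable {R M : Type*} [Ring R] [TopologicalSpace M] [AddCommGroup M] [IsTopologicalAddGroup M]
  [Module R M] {P T : M →L[R] M}

theorem mul_mul_one_sub_eq_zero_of_ker_mem_invtSubmodule (hP : IsIdempotentElem P)
    (hT : (P : M →ₗ[R] M).ker ∈ Module.End.invtSubmodule (T : M →ₗ[R] M)) :
    P * T * (1 - P) = 0 := by
  rw [mul_sub, mul_one, sub_eq_zero]
  exact (IsIdempotentElem.conj_eq_of_ker_mem_invtSubmodule hP hT).symm

theorem one_sub_mul_mul_eq_zero_of_range_mem_invtSubmodule (hP : IsIdempotentElem P)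
    (hT : (P : M →ₗ[R] M).range ∈ Module.End.invtSubmodule (T : M →ₗ[R] M)) :
    (1 - P) * T * P = 0 := by
  rw [sub_mul, sub_mul, one_mul, sub_eq_zero]
  exact (IsIdempotentElem.conj_eq_of_range_mem_invtSubmodule hP hT).symm

end Projection

theorem comp_add_smul_comp_eq_of_resolvent_eq {𝕜 X U : Type*} [NontriviallyNormedField 𝕜]
    [NormedAddCommGroup X] [NormedSpace 𝕜 X] [NormedAddCommGroup U] [NormedSpace 𝕜 U]
    (B : U →L[𝕜] X) (C : X →L[𝕜] U) (P R : X →L[𝕜] X) {D₁ D₂ : U →L[𝕜] U}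
    (hD₁ : IsUnit D₁) (hD₂ : IsUnit D₂) (z : 𝕜)
    (hR : R = P * R + R * (1 - P)
      + z • (R * ((1 - P) * (B ∘L Ring.inverse (D₁ ∘L D₂) ∘L C) * P) * R)) :
    D₁ ∘L D₂ + z • (C ∘L R ∘L B) =
      (D₁ + z • (C ∘L R ∘L (1 - P) ∘L B ∘L Ring.inverse D₂)) ∘L
        (D₂ + z • (Ring.inverse D₁ ∘L C ∘L P ∘L R ∘L B)) := by
  have h₁ : ∀ f : U →L[𝕜] U, D₁ ∘L Ring.inverse D₁ ∘L f = f := fun f => by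
    rw [← comp_assoc, ← mul_def D₁, Ring.mul_inverse_cancel _ hD₁, one_def, id_comp]
  have h₂ : Ring.inverse D₂ ∘L D₂ = 1 := Ring.inverse_mul_cancel _ hD₂
  have h₂₁ : ∀ f : U →L[𝕜] U,
      Ring.inverse D₂ ∘L Ring.inverse D₁ ∘L f = Ring.inverse (D₁ ∘L D₂) ∘L f := fun f => by
    rw [← comp_assoc, ← mul_def (Ring.inverse D₂), ← Ring.inverse_mul_of_isUnit hD₁ hD₂, mul_def]
  conv_lhs => rw [hR]
  simp only [mul_def, add_comp, comp_add, smul_comp, comp_smul, comp_assoc, smul_smul, smul_add,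
    h₁, h₂, h₂₁, one_def, comp_id]
  abel

end ContinuousLinearMap

theorem transfer_function_factorization_general
    {X U : Type*} [NormedAddCommGroup X] [InnerProductSpace ℂ X]
    [NormedAddCommGroup U] [InnerProductSpace ℂ U]
    (A : X →L[ℂ] X) (B : U →L[ℂ] X) (C : X →L[ℂ] U) (D : U →L[ℂ] U)
    (Atimes : X →L[ℂ] X) (hAtimes : Atimes = A - B ∘L Ring.inverse (1 + D) ∘L C)
    (L Ltimes : Submodule ℂ X)
    (hAL : ∀ x ∈ L, A x ∈ L) (hAtimesLtimes : ∀ x ∈ Ltimes, Atimes x ∈ Ltimes)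
    (Pi : X →L[ℂ] X) (hPi : IsIdempotentElem Pi)
    (hPiRange : LinearMap.range (Pi : X →ₗ[ℂ] X) = Ltimes) (hPiKer : LinearMap.ker (Pi : X →ₗ[ℂ] X) = L)
    (D₁ D₂ : U →L[ℂ] U) (hD₁ : IsUnit D₁) (hD₂ : IsUnit D₂) (hD₁D₂ : 1 + D = D₁ ∘L D₂)
    (G : ℂ → (U →L[ℂ] U))
    (hG : ∀ w : ℂ, G w = 1 + D + w • (C ∘L Ring.inverse (1 - w • A) ∘L B))
    (W₁ W₂ : ℂ → (U →L[ℂ] U))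
    (hW₁ : ∀ w : ℂ, W₁ w =
      D₁ + w • (C ∘L Ring.inverse (1 - w • A) ∘L (1 - Pi) ∘L B ∘L Ring.inverse D₂))
    (hW₂ : ∀ w : ℂ, W₂ w =
      D₂ + w • (Ring.inverse D₁ ∘L C ∘L Pi ∘L Ring.inverse (1 - w • A) ∘L B)) :
    ∀ z : ℂ, (z = 0 ∨ IsUnit (1 - z • A)) → G z = W₁ z ∘L W₂ z := by
  intro z hz
  have hunit : IsUnit (1 - z • A) := by
    rcases hz with rfl | h
    · simp
    · exact h
  have hPAQ : Pi * A * (1 - Pi) = 0 :=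
    mul_mul_one_sub_eq_zero_of_ker_mem_invtSubmodule hPi (hPiKer ▸ hAL)
  have hQAP : (1 - Pi) * A * Pi = (1 - Pi) * (B ∘L Ring.inverse (D₁ ∘L D₂) ∘L C) * Pi := by
    have h := one_sub_mul_mul_eq_zero_of_range_mem_invtSubmodule hPi (hPiRange ▸ hAtimesLtimes)
    rwa [hAtimes, hD₁D₂, mul_sub, sub_mul, sub_eq_zero] at h
  have hR := Ring.inverse_one_sub_eq_add Pi (z • A) hunit
  simp only [mul_smul_comm, smul_mul_assoc, hPAQ, hQAP, smul_zero, sub_zero] at hR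
  rw [hG, hW₁, hW₂, hD₁D₂]
  exact comp_add_smul_comp_eq_of_resolvent_eq B C Pi _ hD₁ hD₂ z hR

/-- factorization `G(z) = W₁(z)W₂(z)` induced by a direct sum `X = L ∔ L^×`
with `AL ⊆ L`, `A^×L^× ⊆ L^×`, projection `Π` onto `L^×` along `L`, and `I + D = D₁D₂`. -/
theorem transfer_function_factorization
    {X U : Type*} [NormedAddCommGroup X] [InnerProductSpace ℂ X] [CompleteSpace X]
    [NormedAddCommGroup U] [InnerProductSpace ℂ U] [CompleteSpace U]
    (A : X →L[ℂ] X) (B : U →L[ℂ] X) (C : X →L[ℂ] U) (D : U →L[ℂ] U)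
    (hD : IsUnit (1 + D))
    (Atimes : X →L[ℂ] X) (hAtimes : Atimes = A - B ∘L Ring.inverse (1 + D) ∘L C)
    (L Ltimes : Submodule ℂ X)
    (hLClosed : IsClosed (L : Set X)) (hLtimesClosed : IsClosed (Ltimes : Set X))
    (hcompl : IsCompl L Ltimes)
    (hAL : ∀ x ∈ L, A x ∈ L) (hAtimesLtimes : ∀ x ∈ Ltimes, Atimes x ∈ Ltimes)
    (Pi : X →L[ℂ] X) (hPi : IsIdempotentElem Pi)
    (hPiRange : LinearMap.range (Pi : X →ₗ[ℂ] X) = Ltimes) (hPiKer : LinearMap.ker (Pi : X →ₗ[ℂ] X) = L)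
    (D₁ D₂ : U →L[ℂ] U) (hD₁ : IsUnit D₁) (hD₂ : IsUnit D₂) (hD₁D₂ : 1 + D = D₁ ∘L D₂)
    (G : ℂ → (U →L[ℂ] U))
    (hG : ∀ w : ℂ, G w = 1 + D + w • (C ∘L Ring.inverse (1 - w • A) ∘L B))
    (W₁ W₂ : ℂ → (U →L[ℂ] U))
    (hW₁ : ∀ w : ℂ, W₁ w =
      D₁ + w • (C ∘L Ring.inverse (1 - w • A) ∘L (1 - Pi) ∘L B ∘L Ring.inverse D₂))
    (hW₂ : ∀ w : ℂ, W₂ w =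
      D₂ + w • (Ring.inverse D₁ ∘L C ∘L Pi ∘L Ring.inverse (1 - w • A) ∘L B)) :
    ∀ z : ℂ, (z = 0 ∨ IsUnit (1 - z • A)) → G z = W₁ z ∘L W₂ z :=
  transfer_function_factorization_general A B C D Atimes hAtimes L Ltimes hAL hAtimesLtimes Pi hPi
    hPiRange hPiKer D₁ D₂ hD₁ hD₂ hD₁D₂ G hG W₁ W₂ hW₁ hW₂
end

section
/- Let X, U be complex Hilbert spaces, A ∈ B(X), B ∈ B(U,X), C ∈ B(X,U), D ∈ B(U) with I + D invertible, and let H ∈ B(X) be selfadjoint and invertible. Suppose the strict KYP inequality holds: [A B; C D]* diag(H, I) [A B; C D] ≺ diag(H, I), i.e. there is ε > 0 with ⟨H(Ax+Bu), Ax+Bu⟩ + ‖Cx+Du‖² ≤ ⟨Hx, x⟩ + ‖u‖² − ε(‖x‖² + ‖u‖²) for all x ∈ X, u ∈ U. Then A^× := A − B(I+D)⁻¹C satisfies (A^×)* H A^× ≺ H, i.e. there exists δ > 0 with ⟨H A^× x, A^× x⟩ ≤ ⟨Hx, x⟩ − δ‖x‖² for all x ∈ X. -/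
open ContinuousLinearMap

/-! Feed the input `u = -(I + D)⁻¹ C x` into the strict KYP inequality. Then `A x + B u = A^× x`
and `C x + D u = -u`, so the two `‖u‖²` terms cancel and dropping `-ε ‖u‖²` leaves
`⟨H A^× x, A^× x⟩ ≤ ⟨H x, x⟩ - ε ‖x‖²`. -/

theorem ContinuousLinearMap.sub_apply_inverse_one_add {R M : Type*} [Ring R]
    [TopologicalSpace M] [AddCommGroup M] [Module R M] [IsTopologicalAddGroup M]
    {D : M →L[R] M} (hD : IsUnit (1 + D)) (y : M) :
    y - D (Ring.inverse (1 + D) y) = Ring.inverse (1 + D) y := by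
  have hy : Ring.inverse (1 + D) y + D (Ring.inverse (1 + D) y) = y := by
    simpa using congr($(Ring.mul_inverse_cancel _ hD) y)
  rw [sub_eq_iff_eq_add, hy]

theorem strict_KYP_implies_Atimes_contraction_general
    {X U : Type*} [NormedAddCommGroup X] [InnerProductSpace ℂ X]
    [NormedAddCommGroup U] [InnerProductSpace ℂ U]
    (A : X →L[ℂ] X) (B : U →L[ℂ] X) (C : X →L[ℂ] U) (D : U →L[ℂ] U)
    (hD : IsUnit (1 + D))
    (H : X →L[ℂ] X)
    (hKYP : ∃ ε : ℝ, 0 < ε ∧ ∀ (x : X) (u : U),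
      (inner ℂ (H (A x + B u)) (A x + B u) : ℂ).re + ‖C x + D u‖ ^ 2 ≤
        (inner ℂ (H x) x : ℂ).re + ‖u‖ ^ 2 - ε * (‖x‖ ^ 2 + ‖u‖ ^ 2))
    (Atimes : X →L[ℂ] X) (hAtimes : Atimes = A - B ∘L Ring.inverse (1 + D) ∘L C) :
    ∃ δ : ℝ, 0 < δ ∧ ∀ x : X,
      (inner ℂ (H (Atimes x)) (Atimes x) : ℂ).re ≤
        (inner ℂ (H x) x : ℂ).re - δ * ‖x‖ ^ 2 := by
  obtain ⟨ε, hε, hK⟩ := hKYP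
  refine ⟨ε, hε, fun x => ?_⟩
  set u : U := -Ring.inverse (1 + D) (C x)
  have hstate : A x + B u = Atimes x := by
    simp [u, hAtimes, sub_eq_add_neg]
  have houtput : C x + D u = -u := by
    simp only [u, map_neg, neg_neg, ← sub_eq_add_neg, sub_apply_inverse_one_add hD]
  have hKx := hK x u
  rw [hstate, houtput, norm_neg] at hKx
  linarith [mul_nonneg hε.le (sq_nonneg ‖u‖)]

/-- the strict KYP inequality for the system matrix `[A B; C D]` with Gram
operator `diag(H, I)` implies that `A^× = A − B(I+D)⁻¹C` is a uniform `H`-contraction: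
`(A^×)* H A^× ≺ H`. -/
theorem strict_KYP_implies_Atimes_contraction
    {X U : Type*} [NormedAddCommGroup X] [InnerProductSpace ℂ X] [CompleteSpace X]
    [NormedAddCommGroup U] [InnerProductSpace ℂ U] [CompleteSpace U]
    (A : X →L[ℂ] X) (B : U →L[ℂ] X) (C : X →L[ℂ] U) (D : U →L[ℂ] U)
    (hD : IsUnit (1 + D))
    (H : X →L[ℂ] X) (hH : IsSelfAdjoint H) (hHinv : IsUnit H)
    (hKYP : ∃ ε : ℝ, 0 < ε ∧ ∀ (x : X) (u : U),
      (inner ℂ (H (A x + B u)) (A x + B u) : ℂ).re + ‖C x + D u‖ ^ 2 ≤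
        (inner ℂ (H x) x : ℂ).re + ‖u‖ ^ 2 - ε * (‖x‖ ^ 2 + ‖u‖ ^ 2))
    (Atimes : X →L[ℂ] X) (hAtimes : Atimes = A - B ∘L Ring.inverse (1 + D) ∘L C) :
    ∃ δ : ℝ, 0 < δ ∧ ∀ x : X,
      (inner ℂ (H (Atimes x)) (Atimes x) : ℂ).re ≤
        (inner ℂ (H x) x : ℂ).re - δ * ‖x‖ ^ 2 :=
  strict_KYP_implies_Atimes_contraction_general A B C D hD H hKYP Atimes hAtimes
end

section
/- Let X, U be complex Hilbert spaces, A ∈ B(X), B ∈ B(U,X), C ∈ B(X,U), D ∈ B(U) with I + D invertible, and H ∈ B(X) selfadjoint and invertible. If the adjoint strict KYP inequality [A B; C D] diag(H⁻¹, I) [A B; C D]* ≺ diag(H⁻¹, I) holds, then A^× := A − B(I+D)⁻¹C satisfies A^× H⁻¹ (A^×)* ≺ H⁻¹. -/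
/-! Given `x`, feed the adjoint system the input `u` solving `(I + D)* u = -B* x`. Then
`A* x + C* u = (A^×)* x` and `B* x + D* u = -u`, so in the adjoint KYP inequality at `(x, u)`
the terms `‖u‖²` cancel and what remains is the claim with `δ = ε`. -/

open ContinuousLinearMap

section Adjoint

variable {𝕜 E F : Type*} [RCLike 𝕜]
  [NormedAddCommGroup E] [InnerProductSpace 𝕜 E] [CompleteSpace E]
  [NormedAddCommGroup F] [InnerProductSpace 𝕜 F] [CompleteSpace F]

theorem ContinuousLinearMap.adjoint_apply_adjoint_inverse_apply {T : E →L[𝕜] E}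
    (hT : IsUnit T) (y : E) : adjoint T (adjoint (Ring.inverse T) y) = y := by
  rw [← comp_apply, ← adjoint_comp, ← mul_def, Ring.inverse_mul_cancel T hT, one_def, adjoint_id,
    id_apply]

theorem ContinuousLinearMap.exists_adjoint_feedback_input (A : E →L[𝕜] E) (B : F →L[𝕜] E)
    (C : E →L[𝕜] F) (D : F →L[𝕜] F) (hD : IsUnit (1 + D)) (x : E) :
    ∃ u : F, adjoint A x + adjoint C u = adjoint (A - B ∘L Ring.inverse (1 + D) ∘L C) x ∧
      adjoint B x + adjoint D u = -u := by
  refine ⟨-adjoint (Ring.inverse (1 + D)) (adjoint B x), ?_, ?_⟩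
  · rw [map_sub, sub_apply, adjoint_comp, adjoint_comp]
    simp [sub_eq_add_neg]
  · have h := adjoint_apply_adjoint_inverse_apply hD (adjoint B x)
    rw [map_add, adjoint_one, add_apply, one_apply_eq_self] at h
    generalize adjoint (Ring.inverse (1 + D)) (adjoint B x) = v at h ⊢
    rw [map_neg, ← h]
    abel

end Adjoint

theorem adjoint_strict_KYP_implies_Atimes_contraction_general
    {X U : Type*} [NormedAddCommGroup X] [InnerProductSpace ℂ X] [CompleteSpace X]
    [NormedAddCommGroup U] [InnerProductSpace ℂ U] [CompleteSpace U]
    (A : X →L[ℂ] X) (B : U →L[ℂ] X) (C : X →L[ℂ] U) (D : U →L[ℂ] U)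
    (hD : IsUnit (1 + D))
    (H : X →L[ℂ] X)
    (hKYPadj : ∃ ε : ℝ, 0 < ε ∧ ∀ (x : X) (u : U),
      (inner ℂ (Ring.inverse H (ContinuousLinearMap.adjoint A x + ContinuousLinearMap.adjoint C u))
          (ContinuousLinearMap.adjoint A x + ContinuousLinearMap.adjoint C u) : ℂ).re +
        ‖ContinuousLinearMap.adjoint B x + ContinuousLinearMap.adjoint D u‖ ^ 2 ≤
      (inner ℂ (Ring.inverse H x) x : ℂ).re + ‖u‖ ^ 2 - ε * (‖x‖ ^ 2 + ‖u‖ ^ 2))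
    (Atimes : X →L[ℂ] X) (hAtimes : Atimes = A - B ∘L Ring.inverse (1 + D) ∘L C) :
    ∃ δ : ℝ, 0 < δ ∧ ∀ x : X,
      (inner ℂ (Ring.inverse H (ContinuousLinearMap.adjoint Atimes x))
          (ContinuousLinearMap.adjoint Atimes x) : ℂ).re ≤
        (inner ℂ (Ring.inverse H x) x : ℂ).re - δ * ‖x‖ ^ 2 := by
  obtain ⟨ε, hε, hKYP⟩ := hKYPadj
  refine ⟨ε, hε, fun x => ?_⟩
  obtain ⟨u, hAC, hBD⟩ := exists_adjoint_feedback_input A B C D hD x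
  have hxu := hKYP x u
  rw [hAC, hBD, norm_neg, ← hAtimes] at hxu
  nlinarith [mul_nonneg hε.le (sq_nonneg ‖u‖)]

/-- the adjoint strict KYP inequality
`[A B; C D] diag(H⁻¹, I) [A B; C D]* ≺ diag(H⁻¹, I)` implies that `A^× = A − B(I+D)⁻¹C`
satisfies `A^× H⁻¹ (A^×)* ≺ H⁻¹`. -/
theorem adjoint_strict_KYP_implies_Atimes_contraction
    {X U : Type*} [NormedAddCommGroup X] [InnerProductSpace ℂ X] [CompleteSpace X]
    [NormedAddCommGroup U] [InnerProductSpace ℂ U] [CompleteSpace U]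
    (A : X →L[ℂ] X) (B : U →L[ℂ] X) (C : X →L[ℂ] U) (D : U →L[ℂ] U)
    (hD : IsUnit (1 + D))
    (H : X →L[ℂ] X) (hH : IsSelfAdjoint H) (hHinv : IsUnit H)
    (hKYPadj : ∃ ε : ℝ, 0 < ε ∧ ∀ (x : X) (u : U),
      (inner ℂ (Ring.inverse H (ContinuousLinearMap.adjoint A x + ContinuousLinearMap.adjoint C u))
          (ContinuousLinearMap.adjoint A x + ContinuousLinearMap.adjoint C u) : ℂ).re +
        ‖ContinuousLinearMap.adjoint B x + ContinuousLinearMap.adjoint D u‖ ^ 2 ≤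
      (inner ℂ (Ring.inverse H x) x : ℂ).re + ‖u‖ ^ 2 - ε * (‖x‖ ^ 2 + ‖u‖ ^ 2))
    (Atimes : X →L[ℂ] X) (hAtimes : Atimes = A - B ∘L Ring.inverse (1 + D) ∘L C) :
    ∃ δ : ℝ, 0 < δ ∧ ∀ x : X,
      (inner ℂ (Ring.inverse H (ContinuousLinearMap.adjoint Atimes x))
          (ContinuousLinearMap.adjoint Atimes x) : ℂ).re ≤
        (inner ℂ (Ring.inverse H x) x : ℂ).re - δ * ‖x‖ ^ 2 :=
  adjoint_strict_KYP_implies_Atimes_contraction_general A B C D hD H hKYPadj Atimes hAtimes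
end

section
/- Let H be a selfadjoint invertible operator on X = X₋ ⊕ X₊ (orthogonal Hilbert space decomposition) with block form H = [H₋ H₀; H₀* H₊], where H₋ ≺ 0 on X₋ (uniformly negative) and the Schur complement H/H₋ := H₊ − H₀* H₋⁻¹ H₀ is uniformly positive on X₊. Then, in the indefinite inner product [x,y] = ⟨Hx,y⟩, the H-orthogonal companion of the subspace X₋ ⊕ {0} equals { (−H₋⁻¹H₀ x, x) : x ∈ X₊ }, this subspace is uniformly positive, X₋ ⊕ {0} is uniformly negative, and X is the direct sum of these two subspaces. -/
/-!
Self-adjointness of `H₋` gives `⟨H (a, 0), y⟩ = ⟨a, H₋ y₋ + H₀ y₊⟩`, so the `H`-orthogonal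
companion of `X₋ ⊕ {0}` is the kernel of `(y₋, y₊) ↦ H₋ y₋ + H₀ y₊`, which by invertibility of
`H₋` is the graph `y₋ = -H₋⁻¹ H₀ y₊`. On that graph the form `⟨H y, y⟩` collapses to the Schur
complement form `⟨(H/H₋) y₊, y₊⟩`, while `‖y‖² ≤ (1 + ‖H₋⁻¹ H₀‖²) ‖y₊‖²`; on `X₋ ⊕ {0}` it is the
form of `H₋`. Any graph `{(K y₊, y₊)}` is a complement of `X₋ ⊕ {0}`:
`y = (y₋ - K y₊, 0) + (K y₊, y₊)`.
-/

noncomputable section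
open Complex ContinuousLinearMap

variable {X : Type*} [NormedAddCommGroup X] [InnerProductSpace ℂ X]

/-- The `H`-orthogonal companion `M^{[⊥]} = { y | ⟨Hx, y⟩ = 0 for all x ∈ M }`. -/
def kreinOrtho (H : X →L[ℂ] X) (M : Submodule ℂ X) : Submodule ℂ X where
  carrier := {y | ∀ x ∈ M, (inner ℂ (H x) y : ℂ) = 0}
  add_mem' := fun {a b} ha hb x hx => by simp [inner_add_right, ha x hx, hb x hx]
  zero_mem' := fun x hx => by simp
  smul_mem' := fun c y hy x hx => by simp [inner_smul_right, hy x hx]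

@[ext]
theorem WithLp.prod_ext {p : ENNReal} {E F : Type*} {x y : WithLp p (E × F)}
    (h₁ : x.fst = y.fst) (h₂ : x.snd = y.snd) : x = y :=
  WithLp.ofLp_injective p (Prod.ext h₁ h₂)

section Graph

variable {R E F : Type*} [Ring R] [AddCommGroup E] [Module R E] [AddCommGroup F] [Module R F]
  (p : ENNReal)

theorem WithLp.mem_ker_snd_iff (y : WithLp p (E × F)) :
    y ∈ LinearMap.ker ((LinearMap.snd R E F).comp (WithLp.linearEquiv p R (E × F)).toLinearMap) ↔
      y.snd = 0 :=
  Iff.rfl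

theorem WithLp.mem_range_prod_id_iff (K : F →ₗ[R] E) (y : WithLp p (E × F)) :
    y ∈ LinearMap.range
        ((WithLp.linearEquiv p R (E × F)).symm.toLinearMap.comp (K.prod LinearMap.id)) ↔
      y.fst = K y.snd := by
  constructor
  · rintro ⟨b, rfl⟩
    rfl
  · intro hy
    exact ⟨y.snd, by ext <;> simp [hy]⟩

theorem WithLp.isCompl_ker_snd_range_prod_id (K : F →ₗ[R] E) :
    IsCompl
      (LinearMap.ker ((LinearMap.snd R E F).comp (WithLp.linearEquiv p R (E × F)).toLinearMap))
      (LinearMap.range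
        ((WithLp.linearEquiv p R (E × F)).symm.toLinearMap.comp (K.prod LinearMap.id))) := by
  constructor
  · rw [Submodule.disjoint_def]
    intro y hsnd hfst
    rw [WithLp.mem_ker_snd_iff] at hsnd
    rw [WithLp.mem_range_prod_id_iff, hsnd, map_zero] at hfst
    ext <;> simp [hfst, hsnd]
  · rw [codisjoint_iff_le_sup]
    intro y _
    refine Submodule.mem_sup.2
      ⟨WithLp.toLp p (y.fst - K y.snd, 0), rfl, WithLp.toLp p (K y.snd, y.snd),
        (WithLp.mem_range_prod_id_iff p K _).2 rfl, ?_⟩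
    ext <;> simp

end Graph

theorem ContinuousLinearMap.apply_add_eq_zero_iff_eq_neg_inverse {R M : Type*} [Ring R]
    [TopologicalSpace M] [AddCommGroup M] [Module R M] {A : M →L[R] M} (hA : IsUnit A) {a c : M} :
    A a + c = 0 ↔ a = -Ring.inverse A c := by
  constructor
  · intro h
    calc a = Ring.inverse A (A a) := (DFunLike.congr_fun (Ring.inverse_mul_cancel A hA) a).symm
      _ = -Ring.inverse A c := by rw [eq_neg_of_add_eq_zero_left h, map_neg]
  · rintro rfl
    rw [map_neg, neg_add_eq_zero]
    exact DFunLike.congr_fun (Ring.mul_inverse_cancel A hA) c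

theorem WithLp.prod_norm_sq_le_of_fst_eq {𝕜 E F : Type*} [NontriviallyNormedField 𝕜]
    [SeminormedAddCommGroup E] [SeminormedAddCommGroup F] [NormedSpace 𝕜 E] [NormedSpace 𝕜 F]
    (K : F →L[𝕜] E) {y : WithLp 2 (E × F)} (hy : y.fst = K y.snd) :
    ‖y‖ ^ 2 ≤ (1 + ‖K‖ ^ 2) * ‖y.snd‖ ^ 2 := by
  have hK : ‖K y.snd‖ ≤ ‖K‖ * ‖y.snd‖ := K.le_opNorm y.snd
  rw [WithLp.prod_norm_sq_eq_of_L2, hy]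
  nlinarith [norm_nonneg (K y.snd)]

section Block

variable {Xm Xp : Type*}
  [NormedAddCommGroup Xm] [InnerProductSpace ℂ Xm] [CompleteSpace Xm]
  [NormedAddCommGroup Xp] [InnerProductSpace ℂ Xp] [CompleteSpace Xp]
  {H : WithLp 2 (Xm × Xp) →L[ℂ] WithLp 2 (Xm × Xp)} {Hm : Xm →L[ℂ] Xm} {H0 : Xp →L[ℂ] Xm}
  {Hp : Xp →L[ℂ] Xp}

variable (H Hm H0 Hp) in
/-- `H = [H₋ H₀; H₀* H₊]` as a block operator on `X₋ ⊕ X₊`. -/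
def IsBlockOperator : Prop :=
  ∀ a b, H (WithLp.toLp 2 (a, b)) = WithLp.toLp 2 (Hm a + H0 b, adjoint H0 a + Hp b)

variable (Hm H0 Hp) in
def schurComplement : Xp →L[ℂ] Xp :=
  Hp - adjoint H0 ∘L Ring.inverse Hm ∘L H0

theorem inner_apply_eq_of_block (hblock : IsBlockOperator H Hm H0 Hp)
    (x y : WithLp 2 (Xm × Xp)) :
    inner ℂ (H x) y =
      inner ℂ (Hm x.fst + H0 x.snd) y.fst + inner ℂ (adjoint H0 x.fst + Hp x.snd) y.snd := by
  rw [← WithLp.toLp_ofLp (x := x), hblock, WithLp.prod_inner_apply]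
  rfl

theorem inner_apply_eq_of_snd_eq_zero (hblock : IsBlockOperator H Hm H0 Hp)
    (hHm : IsSelfAdjoint Hm) {x : WithLp 2 (Xm × Xp)} (hx : x.snd = 0) (y : WithLp 2 (Xm × Xp)) :
    inner ℂ (H x) y = inner ℂ x.fst (Hm y.fst + H0 y.snd) := by
  rw [inner_apply_eq_of_block hblock, hx, map_zero, add_zero, map_zero, add_zero,
    ← adjoint_inner_right Hm, hHm.adjoint_eq, adjoint_inner_left, inner_add_right]

theorem mem_kreinOrtho_ker_snd_iff (hblock : IsBlockOperator H Hm H0 Hp)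
    (hHm : IsSelfAdjoint Hm) (y : WithLp 2 (Xm × Xp)) :
    y ∈ kreinOrtho H (LinearMap.ker
        ((LinearMap.snd ℂ Xm Xp).comp (WithLp.linearEquiv 2 ℂ (Xm × Xp)).toLinearMap)) ↔
      Hm y.fst + H0 y.snd = 0 := by
  constructor
  · intro hy
    have := hy (WithLp.toLp 2 (Hm y.fst + H0 y.snd, 0)) rfl
    rwa [inner_apply_eq_of_snd_eq_zero hblock hHm rfl, WithLp.toLp_fst, inner_self_eq_zero] at this
  · intro hy x hx
    rw [inner_apply_eq_of_snd_eq_zero hblock hHm hx, hy, inner_zero_right]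

theorem re_inner_apply_self_le_of_snd_eq_zero (hblock : IsBlockOperator H Hm H0 Hp)
    {δ : ℝ} (hHmNeg : ∀ a, (inner ℂ (Hm a) a).re ≤ -δ * ‖a‖ ^ 2)
    {x : WithLp 2 (Xm × Xp)} (hx : x.snd = 0) :
    (inner ℂ (H x) x).re ≤ -δ * ‖x‖ ^ 2 := by
  have hnorm : ‖x‖ ^ 2 = ‖x.fst‖ ^ 2 := by simp [WithLp.prod_norm_sq_eq_of_L2, hx]
  simpa [inner_apply_eq_of_block hblock, hx, hnorm] using hHmNeg x.fst

theorem inner_apply_self_of_fst_eq (hblock : IsBlockOperator H Hm H0 Hp)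
    (hHmInv : IsUnit Hm) {y : WithLp 2 (Xm × Xp)} (hy : y.fst = -(Ring.inverse Hm ∘L H0) y.snd) :
    inner ℂ (H y) y = inner ℂ (schurComplement Hm H0 Hp y.snd) y.snd := by
  have hker : Hm y.fst + H0 y.snd = 0 := (apply_add_eq_zero_iff_eq_neg_inverse hHmInv).2 hy
  rw [inner_apply_eq_of_block hblock, hker, inner_zero_left, zero_add, hy]
  simp [schurComplement, sub_eq_neg_add]

theorem re_inner_apply_self_ge_of_fst_eq (hblock : IsBlockOperator H Hm H0 Hp)
    (hHmInv : IsUnit Hm) {δ : ℝ} (hδ : 0 ≤ δ)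
    (hSchur : ∀ b, δ * ‖b‖ ^ 2 ≤ (inner ℂ (schurComplement Hm H0 Hp b) b).re)
    {y : WithLp 2 (Xm × Xp)} (hy : y.fst = -(Ring.inverse Hm ∘L H0) y.snd) :
    δ / (1 + ‖Ring.inverse Hm ∘L H0‖ ^ 2) * ‖y‖ ^ 2 ≤ (inner ℂ (H y) y).re := by
  set K := Ring.inverse Hm ∘L H0
  have hnorm := WithLp.prod_norm_sq_le_of_fst_eq (-K) hy
  rw [norm_neg] at hnorm
  rw [inner_apply_self_of_fst_eq hblock hHmInv hy]
  calc δ / (1 + ‖K‖ ^ 2) * ‖y‖ ^ 2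
      ≤ δ / (1 + ‖K‖ ^ 2) * ((1 + ‖K‖ ^ 2) * ‖y.snd‖ ^ 2) := by gcongr
    _ = δ * ‖y.snd‖ ^ 2 := by field_simp
    _ ≤ _ := hSchur y.snd

end Block

theorem fundamental_decomposition_from_blocks_general
    {Xm Xp : Type*} [NormedAddCommGroup Xm] [InnerProductSpace ℂ Xm] [CompleteSpace Xm]
    [NormedAddCommGroup Xp] [InnerProductSpace ℂ Xp] [CompleteSpace Xp]
    (H : WithLp 2 (Xm × Xp) →L[ℂ] WithLp 2 (Xm × Xp))
    (Hm : Xm →L[ℂ] Xm) (H0 : Xp →L[ℂ] Xm) (Hp : Xp →L[ℂ] Xp)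
    (hHm : IsSelfAdjoint Hm)
    (hblock : ∀ (a : Xm) (b : Xp),
      H ((WithLp.equiv 2 (Xm × Xp)).symm (a, b)) =
        (WithLp.equiv 2 (Xm × Xp)).symm
          (Hm a + H0 b, ContinuousLinearMap.adjoint H0 a + Hp b))
    (hHmNeg : ∃ δ : ℝ, 0 < δ ∧ ∀ a : Xm, (inner ℂ (Hm a) a : ℂ).re ≤ -δ * ‖a‖ ^ 2)
    (hHmInv : IsUnit Hm)
    (hSchur : ∃ δ : ℝ, 0 < δ ∧ ∀ b : Xp,
      (inner ℂ ((Hp - ContinuousLinearMap.adjoint H0 ∘L Ring.inverse Hm ∘L H0) b) b : ℂ).re ≥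
        δ * ‖b‖ ^ 2)
    (Mneg Mpos : Submodule ℂ (WithLp 2 (Xm × Xp)))
    (hMneg : Mneg = LinearMap.ker
      ((LinearMap.snd ℂ Xm Xp).comp (WithLp.linearEquiv 2 ℂ (Xm × Xp)).toLinearMap))
    (hMpos : Mpos = LinearMap.range
      ((WithLp.linearEquiv 2 ℂ (Xm × Xp)).symm.toLinearMap.comp
        ((-(Ring.inverse Hm ∘L H0)).toLinearMap.prod LinearMap.id))) :
    kreinOrtho H Mneg = Mpos ∧
    (∃ δ : ℝ, 0 < δ ∧ ∀ y ∈ Mpos, (inner ℂ (H y) y : ℂ).re ≥ δ * ‖y‖ ^ 2) ∧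
    (∃ δ : ℝ, 0 < δ ∧ ∀ y ∈ Mneg, (inner ℂ (H y) y : ℂ).re ≤ -δ * ‖y‖ ^ 2) ∧
    IsCompl Mneg Mpos := by
  subst hMneg hMpos
  obtain ⟨δneg, hδneg, hHmNeg⟩ := hHmNeg
  obtain ⟨δ, hδ, hSchur⟩ := hSchur
  refine ⟨?_, ⟨δ / (1 + ‖Ring.inverse Hm ∘L H0‖ ^ 2), by positivity, fun y hy =>
      re_inner_apply_self_ge_of_fst_eq hblock hHmInv hδ.le hSchur
        ((WithLp.mem_range_prod_id_iff 2 _ y).1 hy)⟩,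
    ⟨δneg, hδneg, fun y hy => re_inner_apply_self_le_of_snd_eq_zero hblock hHmNeg hy⟩,
    WithLp.isCompl_ker_snd_range_prod_id 2 _⟩
  ext y
  rw [mem_kreinOrtho_ker_snd_iff hblock hHm, WithLp.mem_range_prod_id_iff,
    apply_add_eq_zero_iff_eq_neg_inverse hHmInv]
  rfl

/-- for `H = [H₋ H₀; H₀* H₊]` selfadjoint invertible on `X₋ ⊕ X₊` with `H₋ ≺ 0`
and Schur complement `H/H₋ = H₊ − H₀*H₋⁻¹H₀ ≻ 0`, the `H`-orthogonal companion of `X₋ ⊕ {0}`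
is the graph `{(−H₋⁻¹H₀x, x) : x ∈ X₊}`, which is uniformly positive, while `X₋ ⊕ {0}` is
uniformly negative, and `X` is the direct sum of the two. -/
theorem fundamental_decomposition_from_blocks
    {Xm Xp : Type*} [NormedAddCommGroup Xm] [InnerProductSpace ℂ Xm] [CompleteSpace Xm]
    [NormedAddCommGroup Xp] [InnerProductSpace ℂ Xp] [CompleteSpace Xp]
    (H : WithLp 2 (Xm × Xp) →L[ℂ] WithLp 2 (Xm × Xp))
    (hH : IsSelfAdjoint H) (hHinv : IsUnit H)
    (Hm : Xm →L[ℂ] Xm) (H0 : Xp →L[ℂ] Xm) (Hp : Xp →L[ℂ] Xp)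
    (hHm : IsSelfAdjoint Hm) (hHp : IsSelfAdjoint Hp)
    (hblock : ∀ (a : Xm) (b : Xp),
      H ((WithLp.equiv 2 (Xm × Xp)).symm (a, b)) =
        (WithLp.equiv 2 (Xm × Xp)).symm
          (Hm a + H0 b, ContinuousLinearMap.adjoint H0 a + Hp b))
    (hHmNeg : ∃ δ : ℝ, 0 < δ ∧ ∀ a : Xm, (inner ℂ (Hm a) a : ℂ).re ≤ -δ * ‖a‖ ^ 2)
    (hHmInv : IsUnit Hm)
    (hSchur : ∃ δ : ℝ, 0 < δ ∧ ∀ b : Xp,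
      (inner ℂ ((Hp - ContinuousLinearMap.adjoint H0 ∘L Ring.inverse Hm ∘L H0) b) b : ℂ).re ≥
        δ * ‖b‖ ^ 2)
    (Mneg Mpos : Submodule ℂ (WithLp 2 (Xm × Xp)))
    (hMneg : Mneg = LinearMap.ker
      ((LinearMap.snd ℂ Xm Xp).comp (WithLp.linearEquiv 2 ℂ (Xm × Xp)).toLinearMap))
    (hMpos : Mpos = LinearMap.range
      ((WithLp.linearEquiv 2 ℂ (Xm × Xp)).symm.toLinearMap.comp
        ((-(Ring.inverse Hm ∘L H0)).toLinearMap.prod LinearMap.id))) :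
    kreinOrtho H Mneg = Mpos ∧
    (∃ δ : ℝ, 0 < δ ∧ ∀ y ∈ Mpos, (inner ℂ (H y) y : ℂ).re ≥ δ * ‖y‖ ^ 2) ∧
    (∃ δ : ℝ, 0 < δ ∧ ∀ y ∈ Mneg, (inner ℂ (H y) y : ℂ).re ≤ -δ * ‖y‖ ^ 2) ∧
    IsCompl Mneg Mpos :=
  fundamental_decomposition_from_blocks_general H Hm H0 Hp hHm hblock hHmNeg hHmInv hSchur Mneg Mpos
    hMneg hMpos
end
end

section
/- Let H be a selfadjoint invertible operator on a complex Hilbert space X, and let A ∈ B(X) satisfy A*HA ≺ H and A H⁻¹ A* ≺ H⁻¹ (A is a uniform bicontraction in the Kreĭn space with Gram operator H). Then the spectrum of A is disjoint from the unit circle 𝕋, i.e. A is dichotomous. -/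
/-!
For `‖z‖ = 1` the form `⟪H x, x⟫` is invariant under `x ↦ z • x`, so the uniform decrease
`⟪H (A x), A x⟫ ≤ ⟪H x, x⟫ - ε ‖x‖²`, together with the local Lipschitz bound of the form, gives
`ε ‖x‖ ≤ C ‖(z - A) x‖`: `z - A` is bounded below. The same argument with `H⁻¹` and `A*` shows that
`conj z - A* = (z - A)*` is bounded below, hence injective, so `z - A` also has dense range and is
invertible.
-/

open scoped InnerProductSpace InnerProduct NNReal

namespace ContinuousLinearMap

variable {𝕜 E : Type*} [RCLike 𝕜] [NormedAddCommGroup E] [InnerProductSpace 𝕜 E]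

/-- `T* B T ≺ B`, for a form `B` that may be indefinite. -/
def IsUniformContraction (B T : E →L[𝕜] E) : Prop :=
  ∃ ε : ℝ, 0 < ε ∧ ∀ x, RCLike.re ⟪B (T x), T x⟫_𝕜 ≤ RCLike.re ⟪B x, x⟫_𝕜 - ε * ‖x‖ ^ 2

lemma norm_inner_map_self_sub_inner_map_self_le (B : E →L[𝕜] E) (u v : E) :
    ‖⟪B u, u⟫_𝕜 - ⟪B v, v⟫_𝕜‖ ≤ ‖B‖ * (‖u‖ + ‖v‖) * ‖u - v‖ := by
  have hsplit : ⟪B u, u⟫_𝕜 - ⟪B v, v⟫_𝕜 = ⟪B (u - v), u⟫_𝕜 + ⟪B v, u - v⟫_𝕜 := by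
    rw [map_sub, inner_sub_left, inner_sub_right]; ring
  calc ‖⟪B u, u⟫_𝕜 - ⟪B v, v⟫_𝕜‖
      ≤ ‖B (u - v)‖ * ‖u‖ + ‖B v‖ * ‖u - v‖ := by
        rw [hsplit]
        exact (norm_add_le _ _).trans (add_le_add (norm_inner_le_norm _ _) (norm_inner_le_norm _ _))
    _ ≤ ‖B‖ * ‖u - v‖ * ‖u‖ + ‖B‖ * ‖v‖ * ‖u - v‖ := by
        gcongr <;> exact B.le_opNorm _
    _ = ‖B‖ * (‖u‖ + ‖v‖) * ‖u - v‖ := by ring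

lemma inner_map_smul_self_of_norm_eq_one (B : E →L[𝕜] E) {z : 𝕜} (hz : ‖z‖ = 1) (x : E) :
    ⟪B (z • x), z • x⟫_𝕜 = ⟪B x, x⟫_𝕜 := by
  rw [map_smul, inner_smul_left, inner_smul_right, ← mul_assoc, RCLike.conj_mul, hz]
  simp

lemma mul_norm_le_of_re_inner_map_comp_le {B T : E →L[𝕜] E} {ε : ℝ}
    (h : ∀ x, RCLike.re ⟪B (T x), T x⟫_𝕜 ≤ RCLike.re ⟪B x, x⟫_𝕜 - ε * ‖x‖ ^ 2)
    {z : 𝕜} (hz : ‖z‖ = 1) (x : E) :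
    ε * ‖x‖ ^ 2 ≤ ‖B‖ * (1 + ‖T‖) * ‖z • x - T x‖ * ‖x‖ := by
  have hzx : ‖z • x‖ = ‖x‖ := by rw [norm_smul, hz, one_mul]
  calc ε * ‖x‖ ^ 2
      ≤ RCLike.re (⟪B (z • x), z • x⟫_𝕜 - ⟪B (T x), T x⟫_𝕜) := by
        rw [map_sub, inner_map_smul_self_of_norm_eq_one B hz]; linarith [h x]
    _ ≤ ‖B‖ * (‖z • x‖ + ‖T x‖) * ‖z • x - T x‖ :=
        (RCLike.re_le_norm _).trans (norm_inner_map_self_sub_inner_map_self_le B _ _)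
    _ ≤ ‖B‖ * (‖x‖ + ‖T‖ * ‖x‖) * ‖z • x - T x‖ := by
        rw [hzx]; gcongr; exact T.le_opNorm x
    _ = ‖B‖ * (1 + ‖T‖) * ‖z • x - T x‖ * ‖x‖ := by ring

lemma IsUniformContraction.exists_antilipschitz_algebraMap_sub {B T : E →L[𝕜] E}
    (hT : IsUniformContraction B T) {z : 𝕜} (hz : ‖z‖ = 1) :
    ∃ c, AntilipschitzWith c (algebraMap 𝕜 (E →L[𝕜] E) z - T) := by
  obtain ⟨ε, hε, h⟩ := hT
  refine ⟨(‖B‖ * (1 + ‖T‖) / ε).toNNReal, antilipschitz_of_bound _ fun x ↦ ?_⟩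
  rw [Real.coe_toNNReal _ (by positivity), sub_apply, algebraMap_apply]
  rcases (norm_nonneg x).eq_or_lt with hx | hx
  · rw [← hx]; positivity
  have key := mul_norm_le_of_re_inner_map_comp_le h hz x
  rw [div_mul_eq_mul_div, le_div_iff₀ hε]
  refine le_of_mul_le_mul_right ?_ hx
  linarith

lemma isUnit_of_antilipschitz_of_injective_adjoint [CompleteSpace E] {T : E →L[𝕜] E}
    {c : ℝ≥0} (hT : AntilipschitzWith c T) (hT' : Function.Injective (T†)) : IsUnit T := by
  rw [isUnit_iff_bijective, bijective_iff_dense_range_and_antilipschitz,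
    Submodule.topologicalClosure_eq_top_iff, orthogonal_range]
  exact ⟨LinearMap.ker_eq_bot.mpr hT', c, hT⟩

theorem IsUniformContraction.notMem_spectrum [CompleteSpace E] {B B' T : E →L[𝕜] E}
    (hT : IsUniformContraction B T) (hT' : IsUniformContraction B' (T†)) {z : 𝕜}
    (hz : ‖z‖ = 1) : z ∉ spectrum 𝕜 T := by
  obtain ⟨c, hc⟩ := hT.exists_antilipschitz_algebraMap_sub hz
  obtain ⟨c', hc'⟩ := hT'.exists_antilipschitz_algebraMap_sub (z := star z) (by simpa using hz)
  have hadj : (algebraMap 𝕜 (E →L[𝕜] E) z - T)† = algebraMap 𝕜 _ (star z) - T† := by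
    simp only [← star_eq_adjoint, star_sub, algebraMap_star_comm]
  rw [spectrum.mem_iff, not_not]
  exact isUnit_of_antilipschitz_of_injective_adjoint hc (hadj ▸ hc'.injective)

end ContinuousLinearMap

theorem uniform_bicontraction_dichotomous_general
    {X : Type*} [NormedAddCommGroup X] [InnerProductSpace ℂ X] [CompleteSpace X]
    (H : X →L[ℂ] X)
    (A : X →L[ℂ] X)
    (hcontr : ∃ ε : ℝ, 0 < ε ∧ ∀ x : X,
      (inner ℂ (H (A x)) (A x) : ℂ).re ≤ (inner ℂ (H x) x : ℂ).re - ε * ‖x‖ ^ 2)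
    (hcontrAdj : ∃ ε : ℝ, 0 < ε ∧ ∀ x : X,
      (inner ℂ (Ring.inverse H (ContinuousLinearMap.adjoint A x))
          (ContinuousLinearMap.adjoint A x) : ℂ).re ≤
        (inner ℂ (Ring.inverse H x) x : ℂ).re - ε * ‖x‖ ^ 2) :
    ∀ z ∈ spectrum ℂ A, ‖z‖ ≠ 1 :=
  fun _ hz hz₁ ↦ ContinuousLinearMap.IsUniformContraction.notMem_spectrum
    (B := H) (B' := Ring.inverse H) hcontr hcontrAdj hz₁ hz

/-- a uniform bicontraction in the Kreĭn space with Gram operator `H`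
(`A*HA ≺ H` and `AH⁻¹A* ≺ H⁻¹`) has no spectrum on the unit circle, i.e. is dichotomous. -/
theorem uniform_bicontraction_dichotomous
    {X : Type*} [NormedAddCommGroup X] [InnerProductSpace ℂ X] [CompleteSpace X]
    (H : X →L[ℂ] X) (hH : IsSelfAdjoint H) (hHinv : IsUnit H)
    (A : X →L[ℂ] X)
    (hcontr : ∃ ε : ℝ, 0 < ε ∧ ∀ x : X,
      (inner ℂ (H (A x)) (A x) : ℂ).re ≤ (inner ℂ (H x) x : ℂ).re - ε * ‖x‖ ^ 2)
    (hcontrAdj : ∃ ε : ℝ, 0 < ε ∧ ∀ x : X,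
      (inner ℂ (Ring.inverse H (ContinuousLinearMap.adjoint A x))
          (ContinuousLinearMap.adjoint A x) : ℂ).re ≤
        (inner ℂ (Ring.inverse H x) x : ℂ).re - ε * ‖x‖ ^ 2) :
    ∀ z ∈ spectrum ℂ A, ‖z‖ ≠ 1 :=
  uniform_bicontraction_dichotomous_general H A hcontr hcontrAdj
end

section
/- Let H be a selfadjoint invertible operator on a complex Hilbert space X and let A ∈ B(X) be a uniform bicontraction with respect to H (A*HA ≺ H and AH⁻¹A* ≺ H⁻¹). Let (X₋, X₊) be the dichotomous pair of A (so A X₊ ⊆ X₊ with σ(A|_{X₊}) ⊂ 𝔻 and A X₋ ⊆ X₋ with σ(A|_{X₋}) ⊂ 𝔼). Then X₊ is uniformly positive and X₋ is uniformly negative with respect to the indefinite inner product [x,y] = ⟨Hx,y⟩; in particular X₊ equipped with [·,·] and X₋ equipped with −[·,·] are Hilbert spaces. -/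
/-!
The quadratic form `q x = re ⟪H x, x⟫` is a strict Lyapunov function for `A`:
`q (A x) + ε ‖x‖² ≤ q x`. On `X₊` the forward orbit `Aⁿ x` tends to `0` by Gelfand's formula,
and `q` decreases along it to `q 0 = 0`, so `q x ≥ q (A x) + ε ‖x‖² ≥ ε ‖x‖²`. On `X₋` the
restriction of `A` is invertible with inverse of spectral radius `< 1`, so `x` has a backward
orbit tending to `0` along which `q` increases to `0`; hence `q x ≤ -ε ‖y₁‖²` where `A y₁ = x`.
-/

noncomputable section
open Complex ContinuousLinearMap

/-- Restriction of a continuous linear map to an invariant closed submodule. -/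
def clmRestrict {X : Type*} [NormedAddCommGroup X] [InnerProductSpace ℂ X]
    (A : X →L[ℂ] X) (M : Submodule ℂ X) (h : ∀ x ∈ M, A x ∈ M) : M →L[ℂ] M :=
  ContinuousLinearMap.codRestrict (A.comp M.subtypeL) M (fun x => h x x.2)

open Filter Topology

section Lyapunov

variable {α : Type*} {f : α → α} {q w : α → ℝ} {c : ℝ} {y : ℕ → α}

theorem add_le_of_forward_orbit (hf : ∀ x, q (f x) + w x ≤ q x) (hw : ∀ x, 0 ≤ w x)
    (hy : ∀ n, y (n + 1) = f (y n)) (hq : Tendsto (q ∘ y) atTop (𝓝 c)) :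
    c + w (y 0) ≤ q (y 0) := by
  have hanti : Antitone (q ∘ y) := antitone_nat_of_succ_le fun n => by
    simp only [Function.comp_apply, hy]
    linarith [hf (y n), hw (y n)]
  calc c + w (y 0) ≤ q (y 1) + w (y 0) := by gcongr; exact hanti.le_of_tendsto hq 1
    _ ≤ q (y 0) := hy 0 ▸ hf (y 0)

theorem add_le_of_backward_orbit (hf : ∀ x, q (f x) + w x ≤ q x) (hw : ∀ x, 0 ≤ w x)
    (hy : ∀ n, f (y (n + 1)) = y n) (hq : Tendsto (q ∘ y) atTop (𝓝 c)) :
    q (y 0) + w (y 1) ≤ c := by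
  have hmono : Monotone (q ∘ y) := monotone_nat_of_le_succ fun n => by
    simp only [Function.comp_apply, ← hy n]
    linarith [hf (y (n + 1)), hw (y (n + 1))]
  calc q (y 0) + w (y 1) ≤ q (y 1) := hy 0 ▸ hf (y 1)
    _ ≤ c := hmono.ge_of_tendsto hq 1

end Lyapunov

section SpectralRadius

variable {𝔸 : Type*} [NormedRing 𝔸] [NormedAlgebra ℂ 𝔸] [CompleteSpace 𝔸]

theorem spectralRadius_lt_one_of_spectrum_subset_ball {a : 𝔸}
    (h : spectrum ℂ a ⊆ Metric.ball 0 1) : spectralRadius ℂ a < 1 := by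
  nontriviality 𝔸
  refine spectrum.spectralRadius_lt_of_forall_lt a fun z hz => ?_
  simpa [← NNReal.coe_lt_coe] using h hz

theorem tendsto_norm_pow_nhds_zero_of_spectralRadius_lt_one {a : 𝔸}
    (h : spectralRadius ℂ a < 1) : Tendsto (fun n => ‖a ^ n‖) atTop (𝓝 0) := by
  obtain ⟨r, hρr, hr1⟩ := ENNReal.lt_iff_exists_nnreal_btwn.mp h
  have hpow : ∀ᶠ n : ℕ in atTop, ‖a ^ n‖ ≤ (r : ℝ) ^ n := by
    have hgelfand := spectrum.pow_nnnorm_pow_one_div_tendsto_nhds_spectralRadius a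
    filter_upwards [hgelfand.eventually_lt_const hρr, eventually_gt_atTop 0] with n hn hn0
    rw [one_div, ENNReal.rpow_inv_lt_iff (by positivity), ENNReal.rpow_natCast,
      ← ENNReal.coe_pow, ENNReal.coe_lt_coe] at hn
    exact_mod_cast hn.le
  exact squeeze_zero' (.of_forall fun n => norm_nonneg _) hpow
    (tendsto_pow_atTop_nhds_zero_of_lt_one r.coe_nonneg (by exact_mod_cast hr1))

end SpectralRadius

theorem spectrum_inv_subset_ball_of_spectrum_subset {𝕜 A : Type*} [NormedField 𝕜] [Ring A]
    [Algebra 𝕜 A] {a : Aˣ}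
    (h : spectrum 𝕜 (a : A) ⊆ {z : 𝕜 | 1 < ‖z‖}) :
    spectrum 𝕜 (↑a⁻¹ : A) ⊆ Metric.ball 0 1 := by
  rw [← spectrum.map_inv]
  intro z hz
  have := h hz
  simp only [Set.mem_ofPred_eq, norm_inv, one_lt_inv_iff₀] at this
  simpa using this.2

theorem ContinuousLinearMap.tendsto_pow_apply_nhds_zero_of_spectrum_subset_ball
    {E : Type*} [NormedAddCommGroup E] [NormedSpace ℂ E] [CompleteSpace E] {T : E →L[ℂ] E}
    (h : spectrum ℂ T ⊆ Metric.ball 0 1) (v : E) :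
    Tendsto (fun n => (T ^ n) v) atTop (𝓝 0) := by
  refine squeeze_zero_norm (fun n => (T ^ n).le_opNorm v) ?_
  simpa using (tendsto_norm_pow_nhds_zero_of_spectralRadius_lt_one
    (spectralRadius_lt_one_of_spectrum_subset_ball h)).mul_const ‖v‖

theorem sq_norm_apply_div_le {𝕜 E F : Type*} [NontriviallyNormedField 𝕜]
    [SeminormedAddCommGroup E] [SeminormedAddCommGroup F] [NormedSpace 𝕜 E] [NormedSpace 𝕜 F]
    (A : E →L[𝕜] F) (v : E) :
    ‖A v‖ ^ 2 / (‖A‖ ^ 2 + 1) ≤ ‖v‖ ^ 2 := by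
  rw [div_le_iff₀ (by positivity)]
  calc ‖A v‖ ^ 2 ≤ (‖A‖ * ‖v‖) ^ 2 := by gcongr; exact A.le_opNorm v
    _ ≤ ‖v‖ ^ 2 * (‖A‖ ^ 2 + 1) := by nlinarith [sq_nonneg ‖v‖]

section DichotomousPair

variable {X : Type*} [NormedAddCommGroup X] [InnerProductSpace ℂ X] {A : X →L[ℂ] X}
  {M : Submodule ℂ X} [CompleteSpace M] {hAM : ∀ x ∈ M, A x ∈ M}

theorem exists_forward_orbit_tendsto_zero
    (hspec : spectrum ℂ (clmRestrict A M hAM) ⊆ Metric.ball 0 1) {x : X} (hx : x ∈ M) :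
    ∃ y : ℕ → X, y 0 = x ∧ (∀ n, y (n + 1) = A (y n)) ∧ Tendsto y atTop (𝓝 0) := by
  refine ⟨fun n => ((clmRestrict A M hAM ^ n) ⟨x, hx⟩ : X), rfl, fun n => ?_, ?_⟩
  · dsimp only
    rw [pow_succ']
    rfl
  · simpa [Function.comp_def] using (continuous_subtype_val.tendsto 0).comp
      (tendsto_pow_apply_nhds_zero_of_spectrum_subset_ball hspec ⟨x, hx⟩)

theorem exists_backward_orbit_tendsto_zero
    (hspec : spectrum ℂ (clmRestrict A M hAM) ⊆ {z : ℂ | 1 < ‖z‖}) {x : X} (hx : x ∈ M) :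
    ∃ y : ℕ → X, y 0 = x ∧ (∀ n, A (y (n + 1)) = y n) ∧ Tendsto y atTop (𝓝 0) := by
  obtain ⟨u, hu⟩ := spectrum.isUnit_of_zero_notMem ℂ fun h0 => by
    have := hspec h0; norm_num at this
  rw [← hu] at hspec
  refine ⟨fun n => ((↑u⁻¹ ^ n : M →L[ℂ] M) ⟨x, hx⟩ : X), rfl, fun n => ?_, ?_⟩
  · change ((clmRestrict A M hAM) _ : X) = _
    rw [← hu, pow_succ']
    exact congrArg Subtype.val (DFunLike.congr_fun u.mul_inv _)
  · simpa [Function.comp_def] using (continuous_subtype_val.tendsto 0).comp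
      (tendsto_pow_apply_nhds_zero_of_spectrum_subset_ball
        (spectrum_inv_subset_ball_of_spectrum_subset hspec) ⟨x, hx⟩)

end DichotomousPair

theorem dichotomous_pair_uniformly_definite_general
    {X : Type*} [NormedAddCommGroup X] [InnerProductSpace ℂ X] [CompleteSpace X]
    (H : X →L[ℂ] X)
    (A : X →L[ℂ] X)
    (hcontr : ∃ ε : ℝ, 0 < ε ∧ ∀ x : X,
      (inner ℂ (H (A x)) (A x) : ℂ).re ≤ (inner ℂ (H x) x : ℂ).re - ε * ‖x‖ ^ 2)
    (Xm Xp : Submodule ℂ X)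
    (hXmClosed : IsClosed (Xm : Set X)) (hXpClosed : IsClosed (Xp : Set X))
    (hAXm : ∀ x ∈ Xm, A x ∈ Xm) (hAXp : ∀ x ∈ Xp, A x ∈ Xp)
    (hspecm : spectrum ℂ (clmRestrict A Xm hAXm) ⊆ {z : ℂ | 1 < ‖z‖})
    (hspecp : spectrum ℂ (clmRestrict A Xp hAXp) ⊆ Metric.ball (0 : ℂ) 1) :
    (∃ δ : ℝ, 0 < δ ∧ ∀ x ∈ Xp, (inner ℂ (H x) x : ℂ).re ≥ δ * ‖x‖ ^ 2) ∧
    (∃ δ : ℝ, 0 < δ ∧ ∀ x ∈ Xm, (inner ℂ (H x) x : ℂ).re ≤ -δ * ‖x‖ ^ 2) := by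
  obtain ⟨ε, hε, hcontr⟩ := hcontr
  have := hXpClosed.completeSpace_coe
  have := hXmClosed.completeSpace_coe
  set q : X → ℝ := fun x => (inner ℂ (H x) x : ℂ).re
  have hq {y : ℕ → X} (hy : Tendsto y atTop (𝓝 0)) : Tendsto (q ∘ y) atTop (𝓝 0) := by
    simpa [q] using ((by fun_prop : Continuous q).tendsto 0).comp hy
  have hstep (x : X) : q (A x) + ε * ‖x‖ ^ 2 ≤ q x := by linarith [hcontr x]
  have hw (x : X) : 0 ≤ ε * ‖x‖ ^ 2 := by positivity
  refine ⟨⟨ε, hε, fun x hx => ?_⟩, ⟨ε / (‖A‖ ^ 2 + 1), by positivity, fun x hx => ?_⟩⟩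
  · obtain ⟨y, rfl, hy, hy0⟩ := exists_forward_orbit_tendsto_zero hspecp hx
    linarith [add_le_of_forward_orbit hstep hw hy (hq hy0)]
  · obtain ⟨y, rfl, hy, hy0⟩ := exists_backward_orbit_tendsto_zero hspecm hx
    have hneg := add_le_of_backward_orbit hstep hw hy (hq hy0)
    have hnorm := sq_norm_apply_div_le A (y 1)
    rw [hy 0] at hnorm
    calc q (y 0) ≤ -(ε * (‖y 0‖ ^ 2 / (‖A‖ ^ 2 + 1))) := by nlinarith
      _ = _ := by ring

/-- if `A` is a uniform bicontraction with respect to the selfadjoint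
invertible Gram operator `H`, and `(X₋, X₊)` is the dichotomous pair of `A`, then `X₊` is
uniformly positive and `X₋` is uniformly negative in the inner product `[x,y] = ⟨Hx,y⟩`. -/
theorem dichotomous_pair_uniformly_definite
    {X : Type*} [NormedAddCommGroup X] [InnerProductSpace ℂ X] [CompleteSpace X]
    (H : X →L[ℂ] X) (hH : IsSelfAdjoint H) (hHinv : IsUnit H)
    (A : X →L[ℂ] X)
    (hcontr : ∃ ε : ℝ, 0 < ε ∧ ∀ x : X,
      (inner ℂ (H (A x)) (A x) : ℂ).re ≤ (inner ℂ (H x) x : ℂ).re - ε * ‖x‖ ^ 2)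
    (hcontrAdj : ∃ ε : ℝ, 0 < ε ∧ ∀ x : X,
      (inner ℂ (Ring.inverse H (ContinuousLinearMap.adjoint A x))
          (ContinuousLinearMap.adjoint A x) : ℂ).re ≤
        (inner ℂ (Ring.inverse H x) x : ℂ).re - ε * ‖x‖ ^ 2)
    (Xm Xp : Submodule ℂ X)
    (hXmClosed : IsClosed (Xm : Set X)) (hXpClosed : IsClosed (Xp : Set X))
    (hcompl : IsCompl Xm Xp)
    (hAXm : ∀ x ∈ Xm, A x ∈ Xm) (hAXp : ∀ x ∈ Xp, A x ∈ Xp)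
    (hspecm : spectrum ℂ (clmRestrict A Xm hAXm) ⊆ {z : ℂ | 1 < ‖z‖})
    (hspecp : spectrum ℂ (clmRestrict A Xp hAXp) ⊆ Metric.ball (0 : ℂ) 1) :
    (∃ δ : ℝ, 0 < δ ∧ ∀ x ∈ Xp, (inner ℂ (H x) x : ℂ).re ≥ δ * ‖x‖ ^ 2) ∧
    (∃ δ : ℝ, 0 < δ ∧ ∀ x ∈ Xm, (inner ℂ (H x) x : ℂ).re ≤ -δ * ‖x‖ ^ 2) :=
  dichotomous_pair_uniformly_definite_general H A hcontr Xm Xp hXmClosed hXpClosed hAXm hAXp hspecm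
    hspecp
end
end

section
/- Let X, U be complex Hilbert spaces, A ∈ B(X), B ∈ B(U,X), C ∈ B(X,U), D ∈ B(U), and let H ∈ B(X) be selfadjoint and invertible such that both strict KYP inequalities hold: [A B; C D]* diag(H, I)[A B; C D] ≺ diag(H, I) and [A B; C D] diag(H⁻¹, I)[A B; C D]* ≺ diag(H⁻¹, I). Assume further that I + D is invertible. Then A^× := A − B(I+D)⁻¹C satisfies both (A^×)* H A^× ≺ H and A^× H⁻¹ (A^×)* ≺ H⁻¹; consequently σ(A^×) ∩ 𝕋 = ∅. -/
/-!
With the feedback input `u = -(I + D)⁻¹ C x` the output `C x + D u` equals `-u`, so the `‖u‖²`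
terms of the KYP inequality cancel and what remains is `(A^×)* H A^× ≺ H`. The adjoint system
`[A* C*; B* D*]` has feedback operator `(A^×)*`, which gives `A^× H⁻¹ (A^×)* ≺ H⁻¹` in the same way.
For `‖z‖ = 1` multiplication by `z` preserves the form `⟪H x, x⟫`, so `T* H T ≺ H` bounds `T - z`
below; the same holds for `T* - z̄`, and an operator on a Hilbert space that is bounded below and
has an injective adjoint is invertible.
-/

noncomputable section
open Complex ContinuousLinearMap

section

variable {X U : Type*} [NormedAddCommGroup X] [InnerProductSpace ℂ X]

/-- `T* G T ≺ G`, as an inequality of quadratic forms; `G` need not be definite. -/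
def IsStrictStein (G T : X →L[ℂ] X) : Prop :=
  ∃ δ : ℝ, 0 < δ ∧ ∀ x : X,
    (inner ℂ (G (T x)) (T x) : ℂ).re ≤ (inner ℂ (G x) x : ℂ).re - δ * ‖x‖ ^ 2

/-- `[A B; C D]* diag(G, I) [A B; C D] ≺ diag(G, I)`, as an inequality of quadratic forms. -/
def IsStrictKYP [NormedAddCommGroup U] [NormedSpace ℂ U] (G A : X →L[ℂ] X) (B : U →L[ℂ] X)
    (C : X →L[ℂ] U) (D : U →L[ℂ] U) : Prop :=
  ∃ ε : ℝ, 0 < ε ∧ ∀ (x : X) (u : U),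
    (inner ℂ (G (A x + B u)) (A x + B u) : ℂ).re + ‖C x + D u‖ ^ 2 ≤
      (inner ℂ (G x) x : ℂ).re + ‖u‖ ^ 2 - ε * (‖x‖ ^ 2 + ‖u‖ ^ 2)

theorem IsStrictKYP.isStrictStein_feedback [NormedAddCommGroup U] [NormedSpace ℂ U]
    {G A : X →L[ℂ] X} {B : U →L[ℂ] X} {C : X →L[ℂ] U} {D : U →L[ℂ] U}
    (hKYP : IsStrictKYP G A B C D) (hD : IsUnit (1 + D)) :
    IsStrictStein G (A - B ∘L Ring.inverse (1 + D) ∘L C) := by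
  obtain ⟨ε, hε, hineq⟩ := hKYP
  refine ⟨ε, hε, fun x => ?_⟩
  set w := Ring.inverse (1 + D) (C x)
  have hw : w + D w = C x := by
    simpa [w] using congr($(Ring.mul_inverse_cancel _ hD) (C x))
  have hstate : A x + B (-w) = (A - B ∘L Ring.inverse (1 + D) ∘L C) x := by
    simp [w, sub_eq_add_neg]
  have houtput : C x + D (-w) = w := by
    rw [map_neg, ← hw]; abel
  have hkyp := hineq x (-w)
  rw [hstate, houtput, norm_neg] at hkyp
  nlinarith [mul_nonneg hε.le (sq_nonneg ‖w‖)]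

theorem adjoint_sub_comp_inverse_one_add_comp [CompleteSpace X] [NormedAddCommGroup U]
    [InnerProductSpace ℂ U] [CompleteSpace U] (A : X →L[ℂ] X) (B : U →L[ℂ] X) (C : X →L[ℂ] U)
    (D : U →L[ℂ] U) :
    adjoint (A - B ∘L Ring.inverse (1 + D) ∘L C) =
      adjoint A - adjoint C ∘L Ring.inverse (1 + adjoint D) ∘L adjoint B := by
  rw [map_sub, adjoint_comp, adjoint_comp, ← star_eq_adjoint (Ring.inverse _), ← Ring.inverse_star,
    star_add, star_one, star_eq_adjoint, comp_assoc]

theorem inner_map_smul_smul_of_norm_eq_one (G : X →L[ℂ] X) (x : X) {z : ℂ} (hz : ‖z‖ = 1) :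
    inner ℂ (G (z • x)) (z • x) = inner ℂ (G x) x := by
  rw [map_smul, inner_smul_left, inner_smul_right, ← mul_assoc, conj_mul', hz]
  simp

theorem re_inner_map_self_sub_re_inner_map_add_le (G : X →L[ℂ] X) (y w : X) :
    (inner ℂ (G y) y : ℂ).re - (inner ℂ (G (y + w)) (y + w) : ℂ).re ≤
      ‖G‖ * ‖w‖ * (2 * ‖y‖ + ‖w‖) := by
  have hbound : ∀ a b : X, -(inner ℂ (G a) b : ℂ).re ≤ ‖G‖ * ‖a‖ * ‖b‖ := fun a b =>
    calc -(inner ℂ (G a) b : ℂ).re ≤ ‖(inner ℂ (G a) b : ℂ)‖ :=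
          (neg_le_abs _).trans (abs_re_le_norm _)
      _ ≤ ‖G a‖ * ‖b‖ := norm_inner_le_norm _ _
      _ ≤ ‖G‖ * ‖a‖ * ‖b‖ := by gcongr; exact G.le_opNorm a
  have hexpand : (inner ℂ (G (y + w)) (y + w) : ℂ).re = (inner ℂ (G y) y : ℂ).re +
      (inner ℂ (G y) w : ℂ).re + (inner ℂ (G w) y : ℂ).re + (inner ℂ (G w) w : ℂ).re := by
    simp only [map_add, inner_add_left, inner_add_right, add_re]
    ring
  linarith [hbound y w, hbound w y, hbound w w]

theorem mul_le_add_mul_mul_of_mul_sq_le {δ M a b : ℝ} (hδ : 0 ≤ δ) (hM : 0 ≤ M) (hb : 0 ≤ b)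
    (h : δ * a ^ 2 ≤ M * b * (2 * a + b)) : δ * a ≤ (δ + 3 * M) * b := by
  rcases le_or_gt a b with hab | hba
  · nlinarith
  · have ha : 0 < a := hb.trans_lt hba
    have hsq : a * (δ * a) ≤ a * (3 * M * b) := by
      nlinarith [mul_le_mul_of_nonneg_left hba.le (mul_nonneg hM hb)]
    nlinarith [le_of_mul_le_mul_left hsq ha, mul_nonneg hδ hb]

theorem IsStrictStein.exists_pos_mul_le_norm_sub_smul {G T : X →L[ℂ] X} (hT : IsStrictStein G T)
    {z : ℂ} (hz : ‖z‖ = 1) : ∃ c > 0, ∀ x, c * ‖x‖ ≤ ‖(T - z • 1) x‖ := by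
  obtain ⟨δ, hδ, hstein⟩ := hT
  have hG := norm_nonneg G
  refine ⟨δ / (δ + 3 * ‖G‖), by positivity, fun x => ?_⟩
  set w := (T - z • 1) x
  have hTx : T x = z • x + w := by simp [w]
  have hquad : δ * ‖x‖ ^ 2 ≤ ‖G‖ * ‖w‖ * (2 * ‖x‖ + ‖w‖) := by
    have := re_inner_map_self_sub_re_inner_map_add_le G (z • x) w
    rw [inner_map_smul_smul_of_norm_eq_one G x hz, norm_smul, hz, one_mul, ← hTx] at this
    linarith [hstein x]
  rw [div_mul_eq_mul_div, div_le_iff₀ (by positivity), mul_comm ‖w‖]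
  exact mul_le_add_mul_mul_of_mul_sq_le hδ.le hG (norm_nonneg w) hquad

theorem isUnit_of_antilipschitz_of_injective_adjoint [CompleteSpace X] {T : X →L[ℂ] X}
    (hT : ∃ K, AntilipschitzWith K T) (hT' : Function.Injective (adjoint T)) : IsUnit T := by
  rw [isUnit_iff_bijective, bijective_iff_dense_range_and_antilipschitz,
    Submodule.topologicalClosure_eq_top_iff, orthogonal_range]
  exact ⟨LinearMap.ker_eq_bot.mpr hT', hT⟩

theorem IsStrictStein.norm_ne_one_of_mem_spectrum [CompleteSpace X] {G G' T : X →L[ℂ] X}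
    (hT : IsStrictStein G T) (hT' : IsStrictStein G' (adjoint T)) {z : ℂ}
    (hz : z ∈ spectrum ℂ T) : ‖z‖ ≠ 1 := by
  intro hz1
  have hadj : adjoint (T - z • 1) = adjoint T - (starRingEnd ℂ z) • 1 := by
    rw [← star_eq_adjoint, star_sub, star_smul, star_one, star_eq_adjoint]; rfl
  have hunit : IsUnit (T - z • 1) := by
    refine isUnit_of_antilipschitz_of_injective_adjoint
      (antilipschitzWith_iff_exists_mul_le_norm.mpr (hT.exists_pos_mul_le_norm_sub_smul hz1)) ?_
    obtain ⟨K, hK⟩ := antilipschitzWith_iff_exists_mul_le_norm.mpr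
      (hT'.exists_pos_mul_le_norm_sub_smul (by rwa [norm_conj]))
    rw [hadj]
    exact hK.injective
  apply spectrum.mem_iff.mp hz
  rw [Algebra.algebraMap_eq_smul_one, ← neg_sub]
  exact hunit.neg

end

theorem Atimes_bicontraction_and_dichotomous_general
    {X U : Type*} [NormedAddCommGroup X] [InnerProductSpace ℂ X] [CompleteSpace X]
    [NormedAddCommGroup U] [InnerProductSpace ℂ U] [CompleteSpace U]
    (A : X →L[ℂ] X) (B : U →L[ℂ] X) (C : X →L[ℂ] U) (D : U →L[ℂ] U)
    (H : X →L[ℂ] X)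
    (hKYP : ∃ ε : ℝ, 0 < ε ∧ ∀ (x : X) (u : U),
      (inner ℂ (H (A x + B u)) (A x + B u) : ℂ).re + ‖C x + D u‖ ^ 2 ≤
        (inner ℂ (H x) x : ℂ).re + ‖u‖ ^ 2 - ε * (‖x‖ ^ 2 + ‖u‖ ^ 2))
    (hKYPadj : ∃ ε : ℝ, 0 < ε ∧ ∀ (x : X) (u : U),
      (inner ℂ (Ring.inverse H (ContinuousLinearMap.adjoint A x + ContinuousLinearMap.adjoint C u))
          (ContinuousLinearMap.adjoint A x + ContinuousLinearMap.adjoint C u) : ℂ).re +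
        ‖ContinuousLinearMap.adjoint B x + ContinuousLinearMap.adjoint D u‖ ^ 2 ≤
      (inner ℂ (Ring.inverse H x) x : ℂ).re + ‖u‖ ^ 2 - ε * (‖x‖ ^ 2 + ‖u‖ ^ 2))
    (hD : IsUnit (1 + D))
    (Atimes : X →L[ℂ] X) (hAtimes : Atimes = A - B ∘L Ring.inverse (1 + D) ∘L C) :
    (∃ δ : ℝ, 0 < δ ∧ ∀ x : X,
      (inner ℂ (H (Atimes x)) (Atimes x) : ℂ).re ≤ (inner ℂ (H x) x : ℂ).re - δ * ‖x‖ ^ 2) ∧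
    (∃ δ : ℝ, 0 < δ ∧ ∀ x : X,
      (inner ℂ (Ring.inverse H (ContinuousLinearMap.adjoint Atimes x))
          (ContinuousLinearMap.adjoint Atimes x) : ℂ).re ≤
        (inner ℂ (Ring.inverse H x) x : ℂ).re - δ * ‖x‖ ^ 2) ∧
    (∀ z ∈ spectrum ℂ Atimes, ‖z‖ ≠ 1) := by
  have hDadj : IsUnit (1 + adjoint D) := by
    simpa only [star_add, star_one, star_eq_adjoint] using hD.star
  have hstein : IsStrictStein H Atimes := hAtimes ▸ IsStrictKYP.isStrictStein_feedback hKYP hD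
  have hstein_adj : IsStrictStein (Ring.inverse H) (adjoint Atimes) := by
    rw [hAtimes, adjoint_sub_comp_inverse_one_add_comp]
    exact IsStrictKYP.isStrictStein_feedback hKYPadj hDadj
  exact ⟨hstein, hstein_adj, fun z hz => hstein.norm_ne_one_of_mem_spectrum hstein_adj hz⟩

/-- if both strict KYP inequalities hold for `[A B; C D]` with the selfadjoint
invertible Gram operator `H`, and `I + D` is invertible, then `A^× = A − B(I+D)⁻¹C` satisfies
`(A^×)*HA^× ≺ H` and `A^×H⁻¹(A^×)* ≺ H⁻¹`; consequently `σ(A^×) ∩ 𝕋 = ∅`. -/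
theorem Atimes_bicontraction_and_dichotomous
    {X U : Type*} [NormedAddCommGroup X] [InnerProductSpace ℂ X] [CompleteSpace X]
    [NormedAddCommGroup U] [InnerProductSpace ℂ U] [CompleteSpace U]
    (A : X →L[ℂ] X) (B : U →L[ℂ] X) (C : X →L[ℂ] U) (D : U →L[ℂ] U)
    (H : X →L[ℂ] X) (hH : IsSelfAdjoint H) (hHinv : IsUnit H)
    (hKYP : ∃ ε : ℝ, 0 < ε ∧ ∀ (x : X) (u : U),
      (inner ℂ (H (A x + B u)) (A x + B u) : ℂ).re + ‖C x + D u‖ ^ 2 ≤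
        (inner ℂ (H x) x : ℂ).re + ‖u‖ ^ 2 - ε * (‖x‖ ^ 2 + ‖u‖ ^ 2))
    (hKYPadj : ∃ ε : ℝ, 0 < ε ∧ ∀ (x : X) (u : U),
      (inner ℂ (Ring.inverse H (ContinuousLinearMap.adjoint A x + ContinuousLinearMap.adjoint C u))
          (ContinuousLinearMap.adjoint A x + ContinuousLinearMap.adjoint C u) : ℂ).re +
        ‖ContinuousLinearMap.adjoint B x + ContinuousLinearMap.adjoint D u‖ ^ 2 ≤
      (inner ℂ (Ring.inverse H x) x : ℂ).re + ‖u‖ ^ 2 - ε * (‖x‖ ^ 2 + ‖u‖ ^ 2))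
    (hD : IsUnit (1 + D))
    (Atimes : X →L[ℂ] X) (hAtimes : Atimes = A - B ∘L Ring.inverse (1 + D) ∘L C) :
    (∃ δ : ℝ, 0 < δ ∧ ∀ x : X,
      (inner ℂ (H (Atimes x)) (Atimes x) : ℂ).re ≤ (inner ℂ (H x) x : ℂ).re - δ * ‖x‖ ^ 2) ∧
    (∃ δ : ℝ, 0 < δ ∧ ∀ x : X,
      (inner ℂ (Ring.inverse H (ContinuousLinearMap.adjoint Atimes x))
          (ContinuousLinearMap.adjoint Atimes x) : ℂ).re ≤
        (inner ℂ (Ring.inverse H x) x : ℂ).re - δ * ‖x‖ ^ 2) ∧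
    (∀ z ∈ spectrum ℂ Atimes, ‖z‖ ≠ 1) :=
  Atimes_bicontraction_and_dichotomous_general A B C D H hKYP hKYPadj hD Atimes hAtimes
end
end

section
/- Let A be a dichotomous operator on a complex Hilbert space X with dichotomous pair (X₋, X₊), and suppose H ∈ B(X) is selfadjoint and invertible with A*HA ≺ H. Decompose H = [H₋ H₀; H₀* H₊] with respect to an orthogonal decomposition X = X₋ ⊕ X₊ (assume additionally that the dichotomous decomposition is orthogonal). Then H₋ ≺ 0 on X₋ and H₊ ≻ 0 on X₊; in particular, ⟨Hx, x⟩ ≤ −δ‖x‖² for all x ∈ X₋ and ⟨Hx, x⟩ ≥ δ‖x‖² for all x ∈ X₊, for some δ > 0. -/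
noncomputable section
open Complex ContinuousLinearMap

/-!
Let `Q x = Re ⟪H x, x⟫`; the hypothesis says `Q (A x) + ε ‖x‖² ≤ Q x`, so `Q` drops by at
least `ε ‖x‖²` at every step of an orbit of `A`. On `X₊` the spectral radius of `A` is `< 1`,
so by Gelfand's formula `Aⁿ x → 0`; telescoping along the orbit and using `Q (Aⁿ x) → 0`
gives `Q x ≥ ε ‖x‖²`. On `X₋` the restriction of `A` is invertible and its inverse has
spectral radius `< 1`; the same telescoping along the backward orbit gives
`Q x ≤ -ε ‖A⁻¹ x‖²`, and `‖x‖ ≤ ‖A|X₋‖ ‖A⁻¹ x‖` turns this into a uniform bound.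
-/

open Filter Topology

theorem le_of_descent_of_tendsto_iterate {α : Type*} {Q φ : α → ℝ} {f : α → α}
    (hφ : ∀ x, 0 ≤ φ x) (hf : ∀ x, Q (f x) + φ x ≤ Q x) {x : α}
    (hx : Tendsto (fun n => Q (f^[n] x)) atTop (𝓝 0)) : φ x ≤ Q x := by
  have hbound : ∀ n, Q (f^[n + 1] x) + φ x ≤ Q x := by
    intro n
    induction n with
    | zero => simpa using hf x
    | succ n ih =>
      have hstep := hf (f^[n + 1] x)
      rw [← Function.iterate_succ_apply' f (n + 1)] at hstep
      linarith [hφ (f^[n + 1] x)]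
  simpa using le_of_tendsto' ((hx.comp (tendsto_add_atTop_nat 1)).add_const (φ x)) hbound

section BanachAlgebra

variable {A : Type*} [NormedRing A] [NormedAlgebra ℂ A]

theorem tendsto_norm_pow_of_spectralRadius_lt_one [CompleteSpace A] {a : A}
    (h : spectralRadius ℂ a < 1) :
    Tendsto (fun n : ℕ => ‖a ^ n‖) atTop (𝓝 0) := by
  obtain ⟨r, hr, hr1⟩ := ENNReal.lt_iff_exists_nnreal_btwn.mp h
  have hlt : ∀ᶠ n : ℕ in atTop, ‖a ^ n‖ ≤ (r : ℝ) ^ n := by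
    filter_upwards [(spectrum.pow_nnnorm_pow_one_div_tendsto_nhds_spectralRadius a)
      |>.eventually_lt_const hr, eventually_gt_atTop 0] with n hn hn0
    rw [one_div, ENNReal.rpow_inv_lt_iff (by positivity), ENNReal.rpow_natCast] at hn
    exact_mod_cast hn.le
  exact squeeze_zero' (.of_forall fun _ => norm_nonneg _) hlt
    (tendsto_pow_atTop_nhds_zero_of_lt_one r.coe_nonneg (by exact_mod_cast hr1))

theorem tendsto_norm_pow_of_spectrum_subset_ball [CompleteSpace A] {a : A}
    (h : spectrum ℂ a ⊆ Metric.ball 0 1) : Tendsto (fun n : ℕ => ‖a ^ n‖) atTop (𝓝 0) := by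
  rcases subsingleton_or_nontrivial A with hA | hA
  · simp [Subsingleton.elim _ (0 : A)]
  refine tendsto_norm_pow_of_spectralRadius_lt_one ?_
  simpa using spectrum.spectralRadius_lt_of_forall_lt a (r := 1) fun z hz => by
    exact_mod_cast mem_ball_zero_iff.mp (h hz)

theorem spectrum_inv_subset_ball_of_one_lt_norm {u : Aˣ}
    (h : spectrum ℂ (u : A) ⊆ {z | 1 < ‖z‖}) :
    spectrum ℂ (↑u⁻¹ : A) ⊆ Metric.ball 0 1 := by
  intro z hz
  rw [← spectrum.map_inv] at hz
  have hz' : 1 < ‖z‖⁻¹ := by simpa using h hz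
  have hpos : 0 < ‖z‖ := inv_pos.mp (one_pos.trans hz')
  simpa using (one_lt_inv₀ hpos).mp hz'

end BanachAlgebra

section Operator

variable {E : Type*} [NormedAddCommGroup E] [NormedSpace ℂ E] [CompleteSpace E]

theorem tendsto_iterate_of_spectrum_subset_ball {T : E →L[ℂ] E}
    (h : spectrum ℂ T ⊆ Metric.ball 0 1) (x : E) :
    Tendsto (fun n => T^[n] x) atTop (𝓝 0) := by
  refine squeeze_zero_norm (fun n => ?_)
    (by simpa using (tendsto_norm_pow_of_spectrum_subset_ball h).mul_const ‖x‖)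
  rw [← pow_apply_eq_iterate]
  exact (T ^ n).le_opNorm x

variable {Q : E → ℝ} {ε : ℝ}

theorem le_of_descent_of_spectrum_subset_ball (hQ : Tendsto Q (𝓝 0) (𝓝 0)) (hε : 0 ≤ ε)
    {T : E →L[ℂ] E} (h : spectrum ℂ T ⊆ Metric.ball 0 1)
    (hT : ∀ x, Q (T x) + ε * ‖x‖ ^ 2 ≤ Q x) (x : E) :
    ε * ‖x‖ ^ 2 ≤ Q x :=
  le_of_descent_of_tendsto_iterate (fun _ => by positivity) hT
    (hQ.comp (tendsto_iterate_of_spectrum_subset_ball h x))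

theorem le_neg_of_descent_of_spectrum_subset_one_lt_norm (hQ : Tendsto Q (𝓝 0) (𝓝 0))
    (hε : 0 ≤ ε) {T : E →L[ℂ] E} (h : spectrum ℂ T ⊆ {z | 1 < ‖z‖})
    (hT : ∀ x, Q (T x) + ε * ‖x‖ ^ 2 ≤ Q x) (x : E) :
    ε / (1 + ‖T‖) ^ 2 * ‖x‖ ^ 2 ≤ -Q x := by
  have hunit : IsUnit T := spectrum.isUnit_of_zero_notMem ℂ fun h0 => by
    have := h h0
    norm_num at this
  set S : E →L[ℂ] E := ↑hunit.unit⁻¹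
  have hTS : ∀ y, T (S y) = y := fun y => congr($(hunit.mul_val_inv) y)
  have hS : spectrum ℂ S ⊆ Metric.ball 0 1 :=
    spectrum_inv_subset_ball_of_one_lt_norm (by simpa using h)
  have hdesc : ε * ‖S x‖ ^ 2 ≤ -Q x :=
    le_of_descent_of_tendsto_iterate (Q := fun y => -Q y) (f := S)
      (φ := fun y => ε * ‖S y‖ ^ 2) (fun _ => by positivity)
      (fun y => by linarith [hTS y ▸ hT (S y)])
      (by simpa using (hQ.comp (tendsto_iterate_of_spectrum_subset_ball hS x)).neg)
  have hnorm : ‖x‖ ≤ (1 + ‖T‖) * ‖S x‖ := calc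
    ‖x‖ = ‖T (S x)‖ := by rw [hTS]
    _ ≤ ‖T‖ * ‖S x‖ := T.le_opNorm _
    _ ≤ (1 + ‖T‖) * ‖S x‖ := by gcongr; linarith
  calc ε / (1 + ‖T‖) ^ 2 * ‖x‖ ^ 2 ≤ ε / (1 + ‖T‖) ^ 2 * ((1 + ‖T‖) * ‖S x‖) ^ 2 := by
        gcongr
    _ = ε * ‖S x‖ ^ 2 := by field_simp
    _ ≤ -Q x := hdesc

end Operator

theorem H_definite_on_dichotomous_pair_general
    {X : Type*} [NormedAddCommGroup X] [InnerProductSpace ℂ X] [CompleteSpace X]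
    (A : X →L[ℂ] X)
    (Xm Xp : Submodule ℂ X)
    (hXmClosed : IsClosed (Xm : Set X)) (hXpClosed : IsClosed (Xp : Set X))
    (hAXm : ∀ x ∈ Xm, A x ∈ Xm) (hAXp : ∀ x ∈ Xp, A x ∈ Xp)
    (hspecm : spectrum ℂ (clmRestrict A Xm hAXm) ⊆ {z : ℂ | 1 < ‖z‖})
    (hspecp : spectrum ℂ (clmRestrict A Xp hAXp) ⊆ Metric.ball (0 : ℂ) 1)
    (H : X →L[ℂ] X)
    (hcontr : ∃ ε : ℝ, 0 < ε ∧ ∀ x : X,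
      (inner ℂ (H (A x)) (A x) : ℂ).re ≤ (inner ℂ (H x) x : ℂ).re - ε * ‖x‖ ^ 2) :
    ∃ δ : ℝ, 0 < δ ∧
      (∀ x ∈ Xm, (inner ℂ (H x) x : ℂ).re ≤ -δ * ‖x‖ ^ 2) ∧
      (∀ x ∈ Xp, (inner ℂ (H x) x : ℂ).re ≥ δ * ‖x‖ ^ 2) := by
  obtain ⟨ε, hε, hdesc⟩ := hcontr
  have : CompleteSpace Xm := hXmClosed.completeSpace_coe
  have : CompleteSpace Xp := hXpClosed.completeSpace_coe
  set Q : X → ℝ := fun x => (inner ℂ (H x) x : ℂ).re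
  have hQ : Tendsto Q (𝓝 0) (𝓝 0) := by
    simpa [Q] using (show Continuous Q by fun_prop).tendsto 0
  have hQsub (M : Submodule ℂ X) : Tendsto (fun v : M => Q v) (𝓝 0) (𝓝 0) :=
    hQ.comp (continuous_subtype_val.tendsto' 0 0 rfl)
  have hdescsub (M : Submodule ℂ X) (hAM : ∀ x ∈ M, A x ∈ M) (v : M) :
      Q (clmRestrict A M hAM v) + ε * ‖v‖ ^ 2 ≤ Q v :=
    le_sub_iff_add_le.mp (hdesc v)
  set C := ‖clmRestrict A Xm hAXm‖
  have hδε : ε / (1 + C) ^ 2 ≤ ε :=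
    div_le_self hε.le (one_le_pow₀ (by linarith [norm_nonneg (clmRestrict A Xm hAXm)]))
  refine ⟨ε / (1 + C) ^ 2, by positivity, fun x hx => ?_, fun x hx => ?_⟩
  · have := le_neg_of_descent_of_spectrum_subset_one_lt_norm (hQsub Xm) hε.le hspecm
      (hdescsub Xm hAXm) ⟨x, hx⟩
    simp only [Submodule.coe_norm] at this
    linarith
  · have := le_of_descent_of_spectrum_subset_ball (hQsub Xp) hε.le hspecp
      (hdescsub Xp hAXp) ⟨x, hx⟩
    simp only [Submodule.coe_norm] at this
    exact (mul_le_mul_of_nonneg_right hδε (sq_nonneg _)).trans this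

/-- if `A` is dichotomous with orthogonal dichotomous decomposition
`X = X₋ ⊕ X₊`, and `H` is selfadjoint invertible with `A*HA ≺ H`, then `H` is uniformly
negative on `X₋` and uniformly positive on `X₊`: there is `δ > 0` with `⟨Hx,x⟩ ≤ −δ‖x‖²`
on `X₋` and `⟨Hx,x⟩ ≥ δ‖x‖²` on `X₊`. -/
theorem H_definite_on_dichotomous_pair
    {X : Type*} [NormedAddCommGroup X] [InnerProductSpace ℂ X] [CompleteSpace X]
    (A : X →L[ℂ] X)
    (Xm Xp : Submodule ℂ X)
    (hXmClosed : IsClosed (Xm : Set X)) (hXpClosed : IsClosed (Xp : Set X))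
    (hcompl : IsCompl Xm Xp)
    (horth : ∀ x ∈ Xm, ∀ y ∈ Xp, (inner ℂ x y : ℂ) = 0)
    (hAXm : ∀ x ∈ Xm, A x ∈ Xm) (hAXp : ∀ x ∈ Xp, A x ∈ Xp)
    (hspecm : spectrum ℂ (clmRestrict A Xm hAXm) ⊆ {z : ℂ | 1 < ‖z‖})
    (hspecp : spectrum ℂ (clmRestrict A Xp hAXp) ⊆ Metric.ball (0 : ℂ) 1)
    (H : X →L[ℂ] X) (hH : IsSelfAdjoint H) (hHinv : IsUnit H)
    (hcontr : ∃ ε : ℝ, 0 < ε ∧ ∀ x : X,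
      (inner ℂ (H (A x)) (A x) : ℂ).re ≤ (inner ℂ (H x) x : ℂ).re - ε * ‖x‖ ^ 2) :
    ∃ δ : ℝ, 0 < δ ∧
      (∀ x ∈ Xm, (inner ℂ (H x) x : ℂ).re ≤ -δ * ‖x‖ ^ 2) ∧
      (∀ x ∈ Xp, (inner ℂ (H x) x : ℂ).re ≥ δ * ‖x‖ ^ 2) :=
  H_definite_on_dichotomous_pair_general A Xm Xp hXmClosed hXpClosed hAXm hAXp hspecm hspecp H
    hcontr
end
end
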